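/- arXiv:1903.07587 — 9 statements merged into one kernel-verified Lean document; each statement's English description precedes it below -/
import Mathlib

section
/- Let a, b, c, M be integers with 1 < a < b < c, 1 + c = a + b, and a ∤ b. Then for every L ≥ 0, every coefficient of 1/((q;q^M)_L (q^c;q^M)_L) - 1/((q^a;q^M)_L (q^b;q^M)_L) is nonnegative. -/
/-!
Expanding each `(1 - q^e)⁻¹` as a geometric series, the coefficient of `q^n` in
`1/((q^p;q^M)_L (q^r;q^M)_L)` counts pairs of multiplicity vectors `x, y ∈ ℕ^L` (encoded as
`t : ℕ ⊕ ℕ → ℕ`, `x = t ∘ inl`, `y = t ∘ inr`) with `∑ⱼ (p + Mj) xⱼ + (r + Mj) yⱼ = n`. With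
`k = ∑ xⱼ` and `m = ∑ yⱼ` this weight is `p k + r m + M ∑ⱼ j (xⱼ + yⱼ)`, so it suffices to
inject the `(a, b)`-pairs into the `(1, c)`-pairs preserving the moment `∑ⱼ j (xⱼ + yⱼ)` and
sending `(k, m)` to some `(k', m')` with `k' + c m' = a k + b m`; changes at `j = 0` do not affect
the moment. If `m ≤ k`, add `(a - 1)(k - m)` to `x₀`. Otherwise swap `x` and
`y` and add `(b - 1)(m - k)` to `x₀`; if moreover `a ∣ b (m - k)`, trade `c` of these units for
one unit of `y₀` (there are enough, since `a ∤ b` forces `m - k ≥ 2`). The three cases give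
`k' - m'` equal to `a (k - m)`, `b (m - k)` and `b (m - k) - a - b`, which are respectively
divisible by `a`, divisible by `b` but not by `a`, and divisible by neither; so the case, and
then `t`, can be read off from the image.
-/

open PowerSeries Finset Sum

namespace PowerSeries

variable {k : Type*} [Field k]

theorem inv_one_sub_X_pow {e : ℕ} (he : e ≠ 0) :
    (1 - X ^ e : k⟦X⟧)⁻¹ = expand e he (mk 1) := by
  rw [PowerSeries.inv_eq_iff_mul_eq_one (by simp [he]), ← expand_X e he, ← map_one (expand e he),
    ← map_sub, ← map_mul, mk_one_mul_one_sub_eq_one]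

theorem coeff_inv_one_sub_X_pow {e : ℕ} (he : e ≠ 0) (n : ℕ) :
    coeff n (1 - X ^ e : k⟦X⟧)⁻¹ = if e ∣ n then 1 else 0 := by
  simp [inv_one_sub_X_pow he, coeff_expand]

theorem inv_prod {ι : Type*} (s : Finset ι) (f : ι → k⟦X⟧) :
    (∏ i ∈ s, f i)⁻¹ = ∏ i ∈ s, (f i)⁻¹ :=
  let invHom : k⟦X⟧ →* k⟦X⟧ :=
    { toFun := fun x => x⁻¹
      map_one' := inv_one
      map_mul' := fun x y => by rw [PowerSeries.mul_inv_rev, mul_comm] }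
  map_prod invHom f s

theorem coeff_prod_inv_one_sub_X_pow {ι : Type*} [DecidableEq ι] {s : Finset ι} {w : ι → ℕ}
    (hw : ∀ i ∈ s, w i ≠ 0) (n : ℕ) :
    coeff n (∏ i ∈ s, (1 - X ^ w i : k⟦X⟧)⁻¹) =
      #{l ∈ s.finsuppAntidiag n | ∀ i ∈ s, w i ∣ l i} := by
  rw [coeff_prod, ← sum_boole]
  refine sum_congr rfl fun l _ => ?_
  rw [← prod_boole]
  exact prod_congr rfl fun i hi => coeff_inv_one_sub_X_pow (hw i hi) _

end PowerSeries

theorem card_filter_dvd_finsuppAntidiag_le {ι κ : Type*} [DecidableEq ι] [DecidableEq κ]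
    {s : Finset ι} {s' : Finset κ} {w : ι → ℕ} {w' : κ → ℕ} (hw' : ∀ i ∈ s', w' i ≠ 0)
    {φ : (ι → ℕ) → κ → ℕ} (hφ : Function.Injective φ)
    (hφ_supp : ∀ t, (∀ i ∉ s, t i = 0) → ∀ i ∉ s', φ t i = 0)
    (hφ_weight : ∀ t, ∑ i ∈ s', w' i * φ t i = ∑ i ∈ s, w i * t i) (n : ℕ) :
    #{l ∈ s.finsuppAntidiag n | ∀ i ∈ s, w i ∣ l i} ≤
      #{l ∈ s'.finsuppAntidiag n | ∀ i ∈ s', w' i ∣ l i} := by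
  set mult : (ι →₀ ℕ) → ι → ℕ := fun l i => l i / w i
  have h_mult {l : ι →₀ ℕ} (hl : l ∈ {l ∈ s.finsuppAntidiag n | ∀ i ∈ s, w i ∣ l i}) :
      (∀ i, l i = w i * mult l i) ∧ ∀ i ∉ s, mult l i = 0 := by
    rw [mem_filter, mem_finsuppAntidiag] at hl
    have h_out {i} (hi : i ∉ s) : l i = 0 := Finsupp.notMem_support_iff.mp (mt (@hl.1.2 i) hi)
    refine ⟨fun i => ?_, fun i hi => by simp [mult, h_out hi]⟩
    by_cases hi : i ∈ s
    · exact (Nat.mul_div_cancel' (hl.2 i hi)).symm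
    · simp [mult, h_out hi]
  refine card_le_card_of_injOn
    (fun l => Finsupp.indicator s' fun i _ => w' i * φ (mult l) i) (fun l hl => ?_)
    (fun l₁ hl₁ l₂ hl₂ heq => ?_)
  · obtain ⟨h_eq, -⟩ := h_mult hl
    simp only [coe_filter, Set.mem_ofPred_eq, mem_finsuppAntidiag] at hl ⊢
    refine ⟨⟨?_, Finsupp.support_indicator_subset _ _⟩, fun i hi => ?_⟩
    · calc ∑ i ∈ s', (Finsupp.indicator s' fun i _ => w' i * φ (mult l) i) i
          _ = ∑ i ∈ s', w' i * φ (mult l) i :=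
            sum_congr rfl fun i hi => Finsupp.indicator_of_mem hi _
          _ = ∑ i ∈ s, l i := by rw [hφ_weight]; exact sum_congr rfl fun i _ => (h_eq i).symm
          _ = n := hl.1.1
    · rw [Finsupp.indicator_of_mem hi]
      exact dvd_mul_right _ _
  · obtain ⟨h_eq₁, h_supp₁⟩ := h_mult hl₁
    obtain ⟨h_eq₂, h_supp₂⟩ := h_mult hl₂
    have h_φ : φ (mult l₁) = φ (mult l₂) := by
      funext i
      by_cases hi : i ∈ s'
      · have := DFunLike.congr_fun heq i
        simp only [Finsupp.indicator_of_mem hi] at this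
        exact Nat.eq_of_mul_eq_mul_left (Nat.pos_of_ne_zero (hw' i hi)) this
      · rw [hφ_supp _ h_supp₁ i hi, hφ_supp _ h_supp₂ i hi]
    ext i
    rw [h_eq₁, h_eq₂, hφ h_φ]

theorem le_sub_one_mul_of_dvd_mul {a b c δ : ℕ} (hab : a < b) (hsum : 1 + c = a + b)
    (hab_dvd : ¬ a ∣ b) (hδ : 0 < δ) (hdvd : a ∣ b * δ) : c ≤ (b - 1) * δ := by
  obtain rfl | hδ2 : δ = 1 ∨ 2 ≤ δ := by omega
  · exact absurd (by simpa using hdvd) hab_dvd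
  · have := Nat.mul_le_mul_left (b - 1) hδ2
    omega

namespace PartitionPair

def numLeft (L : ℕ) (t : ℕ ⊕ ℕ → ℕ) : ℕ := ∑ j ∈ range L, t (inl j)

def numRight (L : ℕ) (t : ℕ ⊕ ℕ → ℕ) : ℕ := ∑ j ∈ range L, t (inr j)

def moment (L : ℕ) (t : ℕ ⊕ ℕ → ℕ) : ℕ := ∑ j ∈ range L, j * (t (inl j) + t (inr j))

def weight (M p q : ℕ) : ℕ ⊕ ℕ → ℕ := Sum.elim (fun j => p + M * j) (fun j => q + M * j)

def rebalance (a b c L : ℕ) (t : ℕ ⊕ ℕ → ℕ) : ℕ ⊕ ℕ → ℕ :=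
  if numRight L t ≤ numLeft L t then
    t + Pi.single (inl 0) ((a - 1) * (numLeft L t - numRight L t))
  else if a ∣ b * (numRight L t - numLeft L t) then
    t ∘ Sum.swap + Pi.single (inl 0) ((b - 1) * (numRight L t - numLeft L t) - c) +
      Pi.single (inr 0) 1
  else t ∘ Sum.swap + Pi.single (inl 0) ((b - 1) * (numRight L t - numLeft L t))

def rebalanceInv (a b c L : ℕ) (t : ℕ ⊕ ℕ → ℕ) : ℕ ⊕ ℕ → ℕ :=
  let d := numLeft L t - numRight L t
  if a ∣ d then t - Pi.single (inl 0) ((a - 1) * (d / a))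
  else if b ∣ d then (t - Pi.single (inl 0) ((b - 1) * (d / b))) ∘ Sum.swap
  else (t - Pi.single (inl 0) ((b - 1) * ((d + a + b) / b) - c) - Pi.single (inr 0) 1) ∘ Sum.swap

variable {a b c L M : ℕ} {t : ℕ ⊕ ℕ → ℕ}

theorem sum_weight_mul (p q : ℕ) (t : ℕ ⊕ ℕ → ℕ) :
    ∑ i ∈ (range L).disjSum (range L), weight M p q i * t i =
      p * numLeft L t + q * numRight L t + M * moment L t := by
  simp only [sum_disjSum, weight, Sum.elim_inl, Sum.elim_inr, numLeft, numRight, moment, mul_sum,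
    ← sum_add_distrib]
  exact sum_congr rfl fun j _ => by ring

@[simp] theorem numLeft_add (t u : ℕ ⊕ ℕ → ℕ) : numLeft L (t + u) = numLeft L t + numLeft L u :=
  sum_add_distrib

@[simp] theorem numRight_add (t u : ℕ ⊕ ℕ → ℕ) :
    numRight L (t + u) = numRight L t + numRight L u :=
  sum_add_distrib

@[simp] theorem moment_add (t u : ℕ ⊕ ℕ → ℕ) : moment L (t + u) = moment L t + moment L u := by
  simp only [moment, ← sum_add_distrib]
  exact sum_congr rfl fun j _ => by simp only [Pi.add_apply]; ring

@[simp] theorem numLeft_comp_swap (t : ℕ ⊕ ℕ → ℕ) : numLeft L (t ∘ Sum.swap) = numRight L t := rfl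

@[simp] theorem numRight_comp_swap (t : ℕ ⊕ ℕ → ℕ) : numRight L (t ∘ Sum.swap) = numLeft L t := rfl

@[simp] theorem moment_comp_swap (t : ℕ ⊕ ℕ → ℕ) : moment L (t ∘ Sum.swap) = moment L t :=
  sum_congr rfl fun j _ => by simp [add_comm]

@[simp] theorem numLeft_single_inr (v : ℕ) : numLeft L (Pi.single (inr 0) v) = 0 := by
  simp [numLeft]

@[simp] theorem numRight_single_inl (v : ℕ) : numRight L (Pi.single (inl 0) v) = 0 := by
  simp [numRight]

@[simp] theorem moment_single_inl (v : ℕ) : moment L (Pi.single (inl 0) v) = 0 := by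
  simp [moment, Pi.single_apply]

@[simp] theorem moment_single_inr (v : ℕ) : moment L (Pi.single (inr 0) v) = 0 := by
  simp [moment, Pi.single_apply]

theorem numLeft_single_inl (hL : 0 < L) (v : ℕ) : numLeft L (Pi.single (inl 0) v) = v := by
  simp [numLeft, Pi.single_apply, hL]

theorem numRight_single_inr (hL : 0 < L) (v : ℕ) : numRight L (Pi.single (inr 0) v) = v := by
  simp [numRight, Pi.single_apply, hL]

theorem moment_rebalance (t : ℕ ⊕ ℕ → ℕ) : moment L (rebalance a b c L t) = moment L t := by
  unfold rebalance
  split_ifs <;> simp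

theorem numLeft_add_mul_numRight_rebalance (hL : 0 < L) (ha : 0 < a) (hab : a < b)
    (hsum : 1 + c = a + b) (hab_dvd : ¬ a ∣ b) :
    numLeft L (rebalance a b c L t) + c * numRight L (rebalance a b c L t) =
      a * numLeft L t + b * numRight L t := by
  have hb : 1 ≤ b := by omega
  unfold rebalance
  split_ifs with hle hdvd
  · simp only [numLeft_add, numRight_add, numLeft_single_inl hL, numRight_single_inl]
    zify [ha, hle] at hsum ⊢
    linear_combination (numRight L t : ℤ) * hsum
  · have hc := le_sub_one_mul_of_dvd_mul hab hsum hab_dvd (by omega) hdvd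
    simp only [numLeft_add, numRight_add, numLeft_single_inl hL, numRight_single_inl,
      numLeft_single_inr, numRight_single_inr hL, numLeft_comp_swap, numRight_comp_swap]
    zify [hb, hc, (not_le.mp hle).le] at hsum ⊢
    linear_combination (numLeft L t : ℤ) * hsum
  · simp only [numLeft_add, numRight_add, numLeft_single_inl hL, numRight_single_inl,
      numLeft_comp_swap, numRight_comp_swap]
    zify [hb, (not_le.mp hle).le] at hsum ⊢
    linear_combination (numLeft L t : ℤ) * hsum

theorem sum_weight_rebalance (hL : 0 < L) (ha : 0 < a) (hab : a < b) (hsum : 1 + c = a + b)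
    (hab_dvd : ¬ a ∣ b) (t : ℕ ⊕ ℕ → ℕ) :
    ∑ i ∈ (range L).disjSum (range L), weight M 1 c i * rebalance a b c L t i =
      ∑ i ∈ (range L).disjSum (range L), weight M a b i * t i := by
  rw [sum_weight_mul, sum_weight_mul, one_mul, moment_rebalance,
    numLeft_add_mul_numRight_rebalance hL ha hab hsum hab_dvd]

theorem rebalance_eq_zero_of_notMem (hL : 0 < L)
    (ht : ∀ i ∉ (range L).disjSum (range L), t i = 0) :
    ∀ i ∉ (range L).disjSum (range L), rebalance a b c L t i = 0 := by
  intro i hi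
  have h_swap : Sum.swap i ∉ (range L).disjSum (range L) := by
    cases i <;> simpa using hi
  have h_inl : i ≠ inl 0 := by rintro rfl; simp [hL] at hi
  have h_inr : i ≠ inr 0 := by rintro rfl; simp [hL] at hi
  unfold rebalance
  split_ifs <;> simp [ht i hi, ht _ h_swap, h_inl, h_inr]

theorem rebalanceInv_rebalance_of_le (hL : 0 < L) (ha : 0 < a)
    (hle : numRight L t ≤ numLeft L t) :
    rebalanceInv a b c L (rebalance a b c L t) = t := by
  obtain ⟨e, he⟩ := Nat.exists_eq_add_of_le hle
  have hφ : rebalance a b c L t = t + Pi.single (inl 0) ((a - 1) * e) := by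
    rw [rebalance, if_pos hle, he, Nat.add_sub_cancel_left]
  have hd : numLeft L (rebalance a b c L t) - numRight L (rebalance a b c L t) = a * e := by
    rw [hφ, numLeft_add, numRight_add, numLeft_single_inl hL, numRight_single_inl, he]
    have := Nat.sub_one_mul a e
    have := Nat.le_mul_of_pos_left e ha
    omega
  rw [rebalanceInv, hd, if_pos (dvd_mul_right a e), Nat.mul_div_cancel_left e ha, hφ,
    add_tsub_cancel_right]

theorem rebalanceInv_rebalance_of_not_dvd (hL : 0 < L) (hb : 0 < b)
    (hlt : numLeft L t < numRight L t) (hdvd : ¬ a ∣ b * (numRight L t - numLeft L t)) :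
    rebalanceInv a b c L (rebalance a b c L t) = t := by
  obtain ⟨δ, hδ⟩ := Nat.exists_eq_add_of_le hlt.le
  rw [hδ, Nat.add_sub_cancel_left] at hdvd
  have hφ : rebalance a b c L t = t ∘ Sum.swap + Pi.single (inl 0) ((b - 1) * δ) := by
    rw [rebalance, if_neg hlt.not_ge, hδ, Nat.add_sub_cancel_left, if_neg hdvd]
  have hd : numLeft L (rebalance a b c L t) - numRight L (rebalance a b c L t) = b * δ := by
    rw [hφ, numLeft_add, numRight_add, numLeft_single_inl hL, numRight_single_inl,
      numLeft_comp_swap, numRight_comp_swap, hδ]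
    have := Nat.sub_one_mul b δ
    have := Nat.le_mul_of_pos_left δ hb
    omega
  rw [rebalanceInv, hd, if_neg hdvd, if_pos (dvd_mul_right b δ), Nat.mul_div_cancel_left δ hb, hφ,
    add_tsub_cancel_right, Function.comp_assoc, Sum.swap_swap_eq, Function.comp_id]

theorem rebalanceInv_rebalance_of_dvd (hL : 0 < L) (ha : 0 < a) (hab : a < b)
    (hsum : 1 + c = a + b) (hab_dvd : ¬ a ∣ b)
    (hlt : numLeft L t < numRight L t) (hdvd : a ∣ b * (numRight L t - numLeft L t)) :
    rebalanceInv a b c L (rebalance a b c L t) = t := by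
  obtain ⟨δ, hδ⟩ := Nat.exists_eq_add_of_le hlt.le
  rw [hδ, Nat.add_sub_cancel_left] at hdvd
  have hc := le_sub_one_mul_of_dvd_mul hab hsum hab_dvd (by omega) hdvd
  have hφ : rebalance a b c L t =
      t ∘ Sum.swap + Pi.single (inl 0) ((b - 1) * δ - c) + Pi.single (inr 0) 1 := by
    rw [rebalance, if_neg hlt.not_ge, hδ, Nat.add_sub_cancel_left, if_pos hdvd]
  have hd : numLeft L (rebalance a b c L t) - numRight L (rebalance a b c L t) + a + b = b * δ := by
    rw [hφ, numLeft_add, numLeft_add, numRight_add, numRight_add, numLeft_single_inl hL,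
      numRight_single_inl, numLeft_single_inr, numRight_single_inr hL,
      numLeft_comp_swap, numRight_comp_swap, hδ]
    have := Nat.sub_one_mul b δ
    have := Nat.le_mul_of_pos_left δ (ha.trans hab)
    omega
  set d := numLeft L (rebalance a b c L t) - numRight L (rebalance a b c L t)
  have hd_a : ¬ a ∣ d := fun had =>
    hab_dvd ((Nat.dvd_add_right (Nat.dvd_add_self_right.mpr had)).mp (hd ▸ hdvd))
  have hd_b : ¬ b ∣ d := fun hbd =>
    have hba : b ∣ a := (Nat.dvd_add_right hbd).mp
      (Nat.dvd_add_self_right.mp (hd ▸ dvd_mul_right b δ))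
    (Nat.le_of_dvd ha hba).not_gt hab
  rw [rebalanceInv, if_neg hd_a, if_neg hd_b, hd, Nat.mul_div_cancel_left δ (ha.trans hab), hφ,
    tsub_tsub, add_assoc, add_tsub_cancel_right, Function.comp_assoc, Sum.swap_swap_eq,
    Function.comp_id]

theorem rebalance_injective (hL : 0 < L) (ha : 0 < a) (hab : a < b) (hsum : 1 + c = a + b)
    (hab_dvd : ¬ a ∣ b) : Function.Injective (rebalance a b c L) := by
  refine Function.LeftInverse.injective (g := rebalanceInv a b c L) fun t => ?_
  rcases le_or_gt (numRight L t) (numLeft L t) with hle | hlt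
  · exact rebalanceInv_rebalance_of_le hL ha hle
  by_cases hdvd : a ∣ b * (numRight L t - numLeft L t)
  · exact rebalanceInv_rebalance_of_dvd hL ha hab hsum hab_dvd hlt hdvd
  · exact rebalanceInv_rebalance_of_not_dvd hL (ha.trans hab) hlt hdvd

theorem prod_inv_mul_prod_inv {k : Type*} [Field k] (p q : ℕ) :
    (∏ j ∈ range L, (1 - (X : k⟦X⟧) ^ (p + M * j)))⁻¹ *
        (∏ j ∈ range L, (1 - (X : k⟦X⟧) ^ (q + M * j)))⁻¹ =
      ∏ i ∈ (range L).disjSum (range L), (1 - (X : k⟦X⟧) ^ weight M p q i)⁻¹ := by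
  rw [inv_prod, inv_prod, prod_disjSum]
  rfl

theorem weight_ne_zero {p q : ℕ} (hp : 0 < p) (hq : 0 < q) (i : ℕ ⊕ ℕ) : weight M p q i ≠ 0 := by
  cases i <;> simp [weight] <;> omega

end PartitionPair

theorem stmt_2_general (a b c M : ℕ) (ha : 1 < a) (hab : a < b)
    (hsum : 1 + c = a + b) (hdvd : ¬ a ∣ b) (L n : ℕ) :
    0 ≤ PowerSeries.coeff n
      ((∏ j ∈ range L, (1 - (X : ℚ⟦X⟧) ^ (1 + M * j)))⁻¹ *
         (∏ j ∈ range L, (1 - (X : ℚ⟦X⟧) ^ (c + M * j)))⁻¹ -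
       (∏ j ∈ range L, (1 - (X : ℚ⟦X⟧) ^ (a + M * j)))⁻¹ *
         (∏ j ∈ range L, (1 - (X : ℚ⟦X⟧) ^ (b + M * j)))⁻¹) := by
  rcases L.eq_zero_or_pos with rfl | hL
  · simp
  have ha₀ : 0 < a := by omega
  have hc₀ : 0 < c := by omega
  rw [map_sub, sub_nonneg, PartitionPair.prod_inv_mul_prod_inv,
    PartitionPair.prod_inv_mul_prod_inv,
    coeff_prod_inv_one_sub_X_pow fun i _ => PartitionPair.weight_ne_zero ha₀ (ha₀.trans hab) i,
    coeff_prod_inv_one_sub_X_pow fun i _ => PartitionPair.weight_ne_zero one_pos hc₀ i,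
    Nat.cast_le]
  exact card_filter_dvd_finsuppAntidiag_le
    (fun i _ => PartitionPair.weight_ne_zero one_pos hc₀ i)
    (PartitionPair.rebalance_injective hL ha₀ hab hsum hdvd)
    (fun _ => PartitionPair.rebalance_eq_zero_of_notMem hL)
    (PartitionPair.sum_weight_rebalance hL ha₀ hab hsum hdvd) n

theorem stmt_2 (a b c M : ℕ) (ha : 1 < a) (hab : a < b) (hbc : b < c)
    (hsum : 1 + c = a + b) (hdvd : ¬ a ∣ b) (L n : ℕ) :
    0 ≤ PowerSeries.coeff n
      ((∏ j ∈ range L, (1 - (X : ℚ⟦X⟧) ^ (1 + M * j)))⁻¹ *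
         (∏ j ∈ range L, (1 - (X : ℚ⟦X⟧) ^ (c + M * j)))⁻¹ -
       (∏ j ∈ range L, (1 - (X : ℚ⟦X⟧) ^ (a + M * j)))⁻¹ *
         (∏ j ∈ range L, (1 - (X : ℚ⟦X⟧) ^ (b + M * j)))⁻¹) :=
  stmt_2_general a b c M ha hab hsum hdvd L n
end

section
/- Let a, b, c be integers with 1 < a < b < c, 1 + c = a + b, and a ∤ b. Then for each n there is an injection from the set of partitions of n all of whose parts equal a or b into the set of partitions of n all of whose parts equal 1 or c. -/
/-!
Write a partition of `n` into parts `a` and `b` as `a * k + b * ℓ = n`, where `ℓ` is its number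
of parts `b`, and put `m = a / gcd a b`. Any two solutions have `ℓ ≡ ℓ' [MOD m]`, so `ℓ` is
recovered from `ℓ / m`, and `ℓ` in turn determines the partition. Since `a ∤ b` we have `m ≥ 2`,
so `c < 2 * b ≤ m * b` and `c * (ℓ / m) ≤ b * ℓ ≤ n`: sending the partition to the one with
`ℓ / m` parts `c` and all other parts `1` is an injection.
-/

namespace Multiset

theorem eq_replicate_count_add_replicate_count {α : Type*} [DecidableEq α] {s : Multiset α}
    {a b : α} (hab : a ≠ b) (h : ∀ i ∈ s, i = a ∨ i = b) :
    s = replicate (s.count a) a + replicate (s.count b) b := by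
  ext j
  simp only [count_add, count_replicate]
  by_cases hja : j = a
  · subst hja; simp [Ne.symm hab]
  by_cases hjb : j = b
  · subst hjb; simp [hab]
  have hjs : j ∉ s := fun hj => (h j hj).elim hja hjb
  simp [count_eq_zero_of_notMem hjs, Ne.symm hja, Ne.symm hjb]

end Multiset

namespace Nat

theorem modEq_div_gcd_of_mul_add_mul_eq {a b k l k' l' : ℕ} (ha : 0 < a)
    (h : a * k + b * l = a * k' + b * l') : l ≡ l' [MOD a / a.gcd b] := by
  set d := a.gcd b
  have hd : 0 < d := gcd_pos_of_pos_left b ha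
  have ha' : d * (a / d) = a := Nat.mul_div_cancel' (gcd_dvd_left a b)
  have hb' : d * (b / d) = b := Nat.mul_div_cancel' (gcd_dvd_right a b)
  have hred : a / d * k + b / d * l = a / d * k' + b / d * l' := by
    apply Nat.eq_of_mul_eq_mul_left hd
    simpa only [mul_add, ← mul_assoc, ha', hb'] using h
  refine ModEq.cancel_left_of_coprime (c := b / d) (coprime_div_gcd_div_gcd hd) ?_
  simpa [ModEq, mul_add_mod] using congrArg (· % (a / d)) hred

theorem two_le_div_gcd {a b : ℕ} (ha : 0 < a) (hdvd : ¬ a ∣ b) : 2 ≤ a / a.gcd b := by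
  have hpos : 0 < a / a.gcd b :=
    div_pos (gcd_le_left b ha) (gcd_pos_of_pos_left b ha)
  have hne : a / a.gcd b ≠ 1 := fun h1 => by
    have hgcd : a.gcd b * 1 = a := h1 ▸ Nat.mul_div_cancel' (gcd_dvd_left a b)
    exact hdvd (gcd_eq_left_iff_dvd.mp (by simpa using hgcd))
  omega

theorem mul_div_le_of_mul_add_mul_eq {a b c m k l n : ℕ} (hc : c ≤ m * b)
    (h : a * k + b * l = n) : c * (l / m) ≤ n :=
  calc c * (l / m) ≤ b * (m * (l / m)) := by
        rw [← mul_assoc, mul_comm b m]; exact mul_le_mul_right _ hc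
    _ ≤ b * l := mul_le_mul_left b (mul_div_le l m)
    _ ≤ n := by omega

end Nat

namespace Nat.Partition

variable {n a b : ℕ}

theorem mul_count_add_mul_count {p : n.Partition} (hab : a ≠ b)
    (hp : ∀ i ∈ p.parts, i = a ∨ i = b) :
    a * p.parts.count a + b * p.parts.count b = n := by
  have hsum := p.parts_sum
  rw [Multiset.eq_replicate_count_add_replicate_count hab hp] at hsum
  simpa [Multiset.sum_replicate, mul_comm] using hsum

theorem eq_of_count_eq {p q : n.Partition} (ha : 0 < a) (hab : a ≠ b)
    (hp : ∀ i ∈ p.parts, i = a ∨ i = b) (hq : ∀ i ∈ q.parts, i = a ∨ i = b)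
    (h : p.parts.count b = q.parts.count b) : p = q := by
  have hsum := (mul_count_add_mul_count hab hp).trans (mul_count_add_mul_count hab hq).symm
  have hca : p.parts.count a = q.parts.count a :=
    Nat.eq_of_mul_eq_mul_left ha (by rw [h] at hsum; omega)
  ext1
  rw [Multiset.eq_replicate_count_add_replicate_count hab hp,
    Multiset.eq_replicate_count_add_replicate_count hab hq, hca, h]

theorem exists_parts_one_or_eq_count_eq {c q : ℕ} (hc : 1 < c) (hq : c * q ≤ n) :
    ∃ p : {p : n.Partition // ∀ i ∈ p.parts, i = 1 ∨ i = c}, p.1.parts.count c = q := by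
  refine ⟨⟨⟨Multiset.replicate q c + Multiset.replicate (n - c * q) 1, ?_, ?_⟩, ?_⟩, ?_⟩
  · intro i hi
    rcases Multiset.mem_add.mp hi with h | h <;> rw [Multiset.eq_of_mem_replicate h] <;> omega
  · simp only [Multiset.sum_add, Multiset.sum_replicate, smul_eq_mul]
    rw [mul_comm]; omega
  · intro i hi
    rcases Multiset.mem_add.mp hi with h | h
    · exact Or.inr (Multiset.eq_of_mem_replicate h)
    · exact Or.inl (Multiset.eq_of_mem_replicate h)
  · simp [Multiset.count_replicate, hc.ne]

end Nat.Partition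

theorem stmt_4_general (a b c : ℕ) (ha : 1 < a) (hab : a < b)
    (hsum : 1 + c = a + b) (hdvd : ¬ a ∣ b) (n : ℕ) :
    ∃ f : {p : n.Partition // ∀ i ∈ p.parts, i = a ∨ i = b} →
        {p : n.Partition // ∀ i ∈ p.parts, i = 1 ∨ i = c},
      Function.Injective f := by
  set m := a / a.gcd b
  have hm : 2 ≤ m := Nat.two_le_div_gcd (by omega) hdvd
  have hc : c ≤ m * b := by nlinarith
  have hbound (p : {p : n.Partition // ∀ i ∈ p.parts, i = a ∨ i = b}) :
      c * (p.1.parts.count b / m) ≤ n :=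
    Nat.mul_div_le_of_mul_add_mul_eq hc (Nat.Partition.mul_count_add_mul_count hab.ne p.2)
  choose f hf using fun p => Nat.Partition.exists_parts_one_or_eq_count_eq (by omega) (hbound p)
  refine ⟨f, fun p p' hpp' => Subtype.ext ?_⟩
  have hdiv : p.1.parts.count b / m = p'.1.parts.count b / m := by rw [← hf, ← hf, hpp']
  have hmod : p.1.parts.count b ≡ p'.1.parts.count b [MOD m] :=
    Nat.modEq_div_gcd_of_mul_add_mul_eq (by omega)
      ((Nat.Partition.mul_count_add_mul_count hab.ne p.2).trans
        (Nat.Partition.mul_count_add_mul_count hab.ne p'.2).symm)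
  exact Nat.Partition.eq_of_count_eq (by omega) hab.ne p.2 p'.2 (Nat.ext_div_modEq hdiv hmod)

theorem stmt_4 (a b c : ℕ) (ha : 1 < a) (hab : a < b) (hbc : b < c)
    (hsum : 1 + c = a + b) (hdvd : ¬ a ∣ b) (n : ℕ) :
    ∃ f : {p : n.Partition // ∀ i ∈ p.parts, i = a ∨ i = b} →
        {p : n.Partition // ∀ i ∈ p.parts, i = 1 ∨ i = c},
      Function.Injective f :=
  stmt_4_general a b c ha hab hsum hdvd n
end

section
/- Let 1 ≤ a < b < M/2 with gcd(b, M) = 1, and let L ≥ 0. Define d(m,n) by (-zq^a;q^M)_L (-zq^{M-a};q^M)_L (1 + z q^{LM+a}) - (-zq^b;q^M)_L (-zq^{M-b};q^M)_L = Σ_{m,n≥0} d(m,n) z^m q^n. Then d(m, nM) ≥ 0 for all m, n ≥ 0. -/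
open Finset

namespace Stmt8Aux

/-- `i`-th smallest element of `S` (0 if out of range). -/
def enn (S : Finset ℕ) (i : ℕ) : ℕ := (S.sort (· ≤ ·)).getD i 0

lemma enn_eq_orderEmb (S : Finset ℕ) {k : ℕ} (h : S.card = k) {i : ℕ} (hi : i < k) :
    enn S i = S.orderEmbOfFin h ⟨i, hi⟩ := by
  rw [Finset.orderEmbOfFin_apply]
  exact List.getD_eq_getElem _ _ (by rw [Finset.length_sort, h]; exact hi)

lemma enn_mem (S : Finset ℕ) {i : ℕ} (hi : i < S.card) : enn S i ∈ S := by
  rw [enn_eq_orderEmb S rfl hi]; exact Finset.orderEmbOfFin_mem _ _ _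

lemma enn_strictMono (S : Finset ℕ) {i i' : ℕ} (h : i < i') (h' : i' < S.card) :
    enn S i < enn S i' := by
  rw [enn_eq_orderEmb S rfl (h.trans h'), enn_eq_orderEmb S rfl h']
  exact (S.orderEmbOfFin rfl).strictMono (by exact h)

lemma enn_mono (S : Finset ℕ) {i i' : ℕ} (h : i ≤ i') (h' : i' < S.card) :
    enn S i ≤ enn S i' := by
  rcases h.lt_or_eq with h | h
  · exact (enn_strictMono S h h').le
  · rw [h]

lemma card_image_strictMono {r : ℕ} (g : Fin r → ℕ) (hg : StrictMono g) :
    (image g univ).card = r := by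
  rw [Finset.card_image_of_injective _ hg.injective, card_univ, Fintype.card_fin]

lemma enn_image_strictMono {r : ℕ} (g : Fin r → ℕ) (hg : StrictMono g) {i : ℕ} (hi : i < r) :
    enn (image g univ) i = g ⟨i, hi⟩ := by
  have h := card_image_strictMono g hg
  have hu := Finset.orderEmbOfFin_unique h
      (f := g) (fun x => mem_image_of_mem _ (mem_univ x)) hg
  rw [enn_eq_orderEmb _ h hi, ← hu]

lemma sum_image_strictMono {r : ℕ} (g : Fin r → ℕ) (hg : StrictMono g) :
    ∑ x ∈ image g univ, x = ∑ i, g i :=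
  Finset.sum_image (fun x _ y _ h => hg.injective h)

lemma eq_of_enn_eq {S T : Finset ℕ} (hc : S.card = T.card)
    (h : ∀ i, i < S.card → enn S i = enn T i) : S = T := by
  have hlen : (S.sort (· ≤ ·)).length = (T.sort (· ≤ ·)).length := by
    rw [Finset.length_sort, Finset.length_sort, hc]
  have hl : S.sort (· ≤ ·) = T.sort (· ≤ ·) := by
    apply List.ext_getElem hlen
    intro i h1 h2
    have := h i (by rwa [Finset.length_sort] at h1)
    unfold enn at this
    rwa [List.getD_eq_getElem _ _ h1, List.getD_eq_getElem _ _ h2] at this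
  have := congrArg List.toFinset hl
  rwa [Finset.sort_toFinset, Finset.sort_toFinset] at this

lemma eq_image_enn (S : Finset ℕ) :
    S = image (fun i : Fin S.card => enn S i) univ := by
  symm
  apply eq_of_enn_eq
  · exact card_image_strictMono _ (fun i i' hii => enn_strictMono S hii i'.2)
  · intro i hi
    rw [card_image_strictMono _ (fun i i' hii => enn_strictMono S hii i'.2)] at hi
    exact enn_image_strictMono _ (fun i i' hii => enn_strictMono S hii i'.2) hi


/-! ### Top-segment increment / decrement operations -/

def gIns (S : Finset ℕ) (c : ℕ) : Fin S.card → ℕ :=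
  fun i => enn S i + (if S.card ≤ (i : ℕ) + c then 1 else 0)

def gDel (S : Finset ℕ) (c : ℕ) : Fin S.card → ℕ :=
  fun i => enn S i - (if S.card ≤ (i : ℕ) + c then 1 else 0)

/-- add 1 to each of the `c` largest elements of `S`. -/
def incTop (c : ℕ) (S : Finset ℕ) : Finset ℕ := image (gIns S c) univ

/-- subtract 1 from each of the `c` largest elements of `S`. -/
def decTop (c : ℕ) (S : Finset ℕ) : Finset ℕ := image (gDel S c) univ

/-- there is a gap (difference ≥ 2) between the `c`-th largest element and the next one. -/
def gapAt (c : ℕ) (S : Finset ℕ) : Prop :=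
  enn S (S.card - c - 1) + 2 ≤ enn S (S.card - c)

lemma gIns_mono (S : Finset ℕ) (c : ℕ) : StrictMono (gIns S c) := by
  intro i i' hii
  have h1 : enn S i < enn S i' := enn_strictMono S hii i'.2
  have h2 : (if S.card ≤ (i : ℕ) + c then 1 else 0) ≤
      (if S.card ≤ (i' : ℕ) + c then 1 else 0) := by
    have : (i : ℕ) ≤ (i' : ℕ) := le_of_lt hii
    split_ifs <;> omega
  unfold gIns; omega

lemma one_le_enn_of_gap {S : Finset ℕ} {c : ℕ} (hgap : gapAt c S) (hc2 : c < S.card)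
    {i : ℕ} (hi : i < S.card) (htop : S.card ≤ i + c) : 2 ≤ enn S i := by
  have h1 : enn S (S.card - c - 1) + 2 ≤ enn S (S.card - c) := hgap
  have h2 : enn S (S.card - c) ≤ enn S i := enn_mono S (by omega) hi
  omega

lemma gDel_mono {S : Finset ℕ} {c : ℕ} (hgap : gapAt c S) (hc2 : c < S.card) :
    StrictMono (gDel S c) := by
  intro i i' hii
  have hii' : (i : ℕ) < (i' : ℕ) := hii
  have h1 : enn S i < enn S i' := enn_strictMono S hii i'.2
  unfold gDel
  by_cases hA : S.card ≤ (i : ℕ) + c <;> by_cases hB : S.card ≤ (i' : ℕ) + c <;>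
    simp only [hA, hB, if_pos, if_neg, not_false_iff, not_true]
  · have h2 : 2 ≤ enn S i' := one_le_enn_of_gap hgap hc2 i'.2 hB
    omega
  · omega
  · have hle : enn S i ≤ enn S (S.card - c - 1) := enn_mono S (by omega) (by omega)
    have hle2 : enn S (S.card - c) ≤ enn S i' := enn_mono S (by omega) i'.2
    have hg : enn S (S.card - c - 1) + 2 ≤ enn S (S.card - c) := hgap
    omega
  · omega

lemma card_incTop (c : ℕ) (S : Finset ℕ) : (incTop c S).card = S.card :=
  card_image_strictMono _ (gIns_mono S c)

lemma enn_incTop (c : ℕ) (S : Finset ℕ) {i : ℕ} (hi : i < S.card) :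
    enn (incTop c S) i = enn S i + (if S.card ≤ i + c then 1 else 0) :=
  enn_image_strictMono _ (gIns_mono S c) hi

lemma card_decTop {c : ℕ} {S : Finset ℕ} (hgap : gapAt c S) (hc2 : c < S.card) :
    (decTop c S).card = S.card :=
  card_image_strictMono _ (gDel_mono hgap hc2)

lemma enn_decTop {c : ℕ} {S : Finset ℕ} (hgap : gapAt c S) (hc2 : c < S.card) {i : ℕ}
    (hi : i < S.card) :
    enn (decTop c S) i = enn S i - (if S.card ≤ i + c then 1 else 0) :=
  enn_image_strictMono _ (gDel_mono hgap hc2) hi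

lemma sum_enn (S : Finset ℕ) : ∑ x ∈ S, x = ∑ i : Fin S.card, enn S i := by
  conv_lhs => rw [eq_image_enn S]
  exact sum_image_strictMono _ (fun i i' hii => enn_strictMono S hii i'.2)

lemma sum_indicator_top (r c : ℕ) (hc : c ≤ r) :
    ∑ i : Fin r, (if r ≤ (i : ℕ) + c then 1 else 0) = c := by
  rw [Fin.sum_univ_eq_sum_range (fun i => if r ≤ i + c then 1 else 0) r]
  have h1 : ∑ i ∈ range r, (if r ≤ i + c then 1 else 0)
      = ((range r).filter (fun i => r ≤ i + c)).card := by
    simp [Finset.sum_boole]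
  have h2 : (range r).filter (fun i => r ≤ i + c) = Finset.Ico (r - c) r := by
    ext x; simp only [mem_filter, mem_range, Finset.mem_Ico]; omega
  rw [h1, h2, Nat.card_Ico]; omega

lemma sum_incTop (c : ℕ) (S : Finset ℕ) (hc : c ≤ S.card) :
    ∑ x ∈ incTop c S, x = (∑ x ∈ S, x) + c := by
  unfold incTop
  rw [sum_image_strictMono _ (gIns_mono S c), sum_enn S]
  unfold gIns
  rw [Finset.sum_add_distrib, sum_indicator_top _ _ hc]

lemma sum_decTop {c : ℕ} {S : Finset ℕ} (hgap : gapAt c S) (hc2 : c < S.card) :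
    (∑ x ∈ decTop c S, x) + c = ∑ x ∈ S, x := by
  unfold decTop
  rw [sum_image_strictMono _ (gDel_mono hgap hc2), sum_enn S]
  unfold gDel
  have : ∀ i : Fin S.card, (enn S i - (if S.card ≤ (i : ℕ) + c then 1 else 0))
      + (if S.card ≤ (i : ℕ) + c then 1 else 0) = enn S i := by
    intro i
    split_ifs with h
    · have := one_le_enn_of_gap hgap hc2 i.2 h; omega
    · omega
  calc (∑ i : Fin S.card, (enn S i - (if S.card ≤ (i : ℕ) + c then 1 else 0))) + c
      = (∑ i : Fin S.card, (enn S i - (if S.card ≤ (i : ℕ) + c then 1 else 0)))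
        + ∑ i : Fin S.card, (if S.card ≤ (i : ℕ) + c then 1 else 0) := by
        rw [sum_indicator_top _ _ (le_of_lt hc2)]
    _ = ∑ i : Fin S.card, enn S i := by
        rw [← Finset.sum_add_distrib]; exact Finset.sum_congr rfl (fun i _ => this i)

lemma incTop_subset {c Lb : ℕ} {S : Finset ℕ} (hS : S ⊆ range Lb) :
    incTop c S ⊆ range (Lb + 1) := by
  intro x hx
  obtain ⟨i, _, rfl⟩ := Finset.mem_image.1 hx
  have : enn S i ∈ S := enn_mem S i.2
  have := hS this
  rw [mem_range] at *
  unfold gIns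
  split_ifs <;> omega

lemma decTop_subset {c Lb : ℕ} {S : Finset ℕ} (hS : S ⊆ range Lb) :
    decTop c S ⊆ range Lb := by
  intro x hx
  obtain ⟨i, _, rfl⟩ := Finset.mem_image.1 hx
  have : enn S i ∈ S := enn_mem S i.2
  have := hS this
  rw [mem_range] at *
  unfold gDel
  split_ifs <;> omega

lemma incTop_inj {c : ℕ} {S T : Finset ℕ} (hcard : S.card = T.card)
    (h : incTop c S = incTop c T) : S = T := by
  apply eq_of_enn_eq hcard
  intro i hi
  have h1 : enn (incTop c S) i = enn (incTop c T) i := by rw [h]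
  rw [enn_incTop c S hi, enn_incTop c T (hcard ▸ hi), hcard] at h1
  split_ifs at h1 <;> omega

lemma decTop_inj {c : ℕ} {S T : Finset ℕ} (hcard : S.card = T.card)
    (hgapS : gapAt c S) (hgapT : gapAt c T) (hc2 : c < S.card)
    (h : decTop c S = decTop c T) : S = T := by
  apply eq_of_enn_eq hcard
  intro i hi
  have h1 : enn (decTop c S) i = enn (decTop c T) i := by rw [h]
  rw [enn_decTop hgapS hc2 hi, enn_decTop hgapT (hcard ▸ hc2) (hcard ▸ hi), hcard] at h1
  split_ifs at h1 with hq
  · have := one_le_enn_of_gap hgapS hc2 hi (hcard ▸ hq)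
    have := one_le_enn_of_gap hgapT (hcard ▸ hc2) (hcard ▸ hi) (hcard ▸ hq)
    rw [hcard] at *
    omega
  · omega

lemma gap_incTop_self {c : ℕ} {S : Finset ℕ} (hc1 : 1 ≤ c) (hc2 : c < S.card) :
    gapAt c (incTop c S) := by
  unfold gapAt
  rw [card_incTop]
  rw [enn_incTop c S (i := S.card - c - 1) (by omega),
      enn_incTop c S (i := S.card - c) (by omega)]
  have h1 : ¬ (S.card ≤ S.card - c - 1 + c) := by omega
  have h2 : S.card ≤ S.card - c + c := by omega
  rw [if_neg h1, if_pos h2]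
  have := enn_strictMono S (show S.card - c - 1 < S.card - c by omega) (by omega)
  omega

lemma gap_incTop_higher {c c' : ℕ} {S : Finset ℕ} (hlt : c < c') (hc'2 : c' ≤ S.card)
    (hc2 : c < S.card) (hc1 : 1 ≤ c) :
    gapAt c (incTop c' S) ↔ gapAt c S := by
  unfold gapAt
  rw [card_incTop]
  rw [enn_incTop c' S (i := S.card - c - 1) (by omega),
      enn_incTop c' S (i := S.card - c) (by omega)]
  have h1 : S.card ≤ S.card - c - 1 + c' := by omega
  have h2 : S.card ≤ S.card - c + c' := by omega
  rw [if_pos h1, if_pos h2]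
  omega

/-! ### Coefficient extraction -/

section Counting

open MvPowerSeries

abbrev PS := MvPowerSeries (Fin 2) ℤ

noncomputable def D (c s : ℕ) : Fin 2 →₀ ℕ := Finsupp.single 0 c + Finsupp.single 1 s

lemma D_add (c s c' s' : ℕ) : D c s + D c' s' = D (c + c') (s + s') := by
  unfold D
  rw [Finsupp.single_add (0 : Fin 2) c c', Finsupp.single_add (1 : Fin 2) s s']
  abel

lemma D_inj {c s c' s' : ℕ} : D c s = D c' s' ↔ (c = c' ∧ s = s') := by
  constructor
  · intro h
    have h0 := DFunLike.congr_fun h (0 : Fin 2)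
    have h1 := DFunLike.congr_fun h (1 : Fin 2)
    simp only [D, Finsupp.add_apply, Finsupp.single_apply] at h0 h1
    norm_num at h0 h1
    exact ⟨h0, h1⟩
  · rintro ⟨rfl, rfl⟩; rfl

lemma mono_eq (t : Finset ℕ) (e : ℕ → ℕ) :
    (∏ i ∈ t, ((X 0 : PS) * X 1 ^ e i)) =
    MvPowerSeries.monomial (D t.card (∑ i ∈ t, e i)) 1 := by
  induction t using Finset.cons_induction with
  | empty => simp [D, MvPowerSeries.monomial_zero_one]
  | cons a s ha ih =>
    rw [Finset.prod_cons, ih, X_def, X_pow_eq, monomial_mul_monomial, monomial_mul_monomial]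
    rw [show Finsupp.single (0 : Fin 2) 1 + Finsupp.single (1 : Fin 2) (e a) = D 1 (e a) from rfl]
    rw [D_add, Finset.card_cons, Finset.sum_cons, one_mul, one_mul, Nat.add_comm 1 s.card]

lemma prod_one_add (e : ℕ → ℕ) (K : ℕ) :
    (∏ i ∈ range K, ((1 : PS) + X 0 * X 1 ^ e i)) =
    ∑ t ∈ (range K).powerset, MvPowerSeries.monomial (D t.card (∑ i ∈ t, e i)) 1 := by
  have h0 : ∀ i : ℕ, ((1 : PS) + X 0 * X 1 ^ e i)
      = (fun i => ((X 0 : PS) * X 1 ^ e i)) i + (fun _ => (1 : PS)) i := by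
    intro i; simp [add_comm]
  calc (∏ i ∈ range K, ((1 : PS) + X 0 * X 1 ^ e i))
      = ∏ i ∈ range K, ((fun i => ((X 0 : PS) * X 1 ^ e i)) i + (fun _ => (1 : PS)) i) :=
        Finset.prod_congr rfl (fun i _ => h0 i)
    _ = ∑ t ∈ (range K).powerset, (∏ i ∈ t, ((X 0 : PS) * X 1 ^ e i)) * ∏ _i ∈ range K \ t, 1 :=
        Finset.prod_add _ _ _
    _ = ∑ t ∈ (range K).powerset, MvPowerSeries.monomial (D t.card (∑ i ∈ t, e i)) 1 := by
        refine Finset.sum_congr rfl (fun t _ => ?_)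
        rw [Finset.prod_const_one, mul_one, mono_eq]

lemma coeff_two_prods (e1 e2 : ℕ → ℕ) (L1 L2 m N : ℕ) :
    (MvPowerSeries.coeff (D m N))
      ((∏ i ∈ range L1, ((1 : PS) + X 0 * X 1 ^ e1 i)) *
       (∏ i ∈ range L2, ((1 : PS) + X 0 * X 1 ^ e2 i)))
    = ((((range L1).powerset ×ˢ (range L2).powerset).filter
        (fun p => p.1.card + p.2.card = m ∧ (∑ i ∈ p.1, e1 i) + (∑ i ∈ p.2, e2 i) = N)).card : ℤ) := by
  rw [prod_one_add e1 L1, prod_one_add e2 L2, Finset.sum_mul_sum]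
  have hterm : ∀ t1 t2 : Finset ℕ,
      (MvPowerSeries.monomial (D t1.card (∑ i ∈ t1, e1 i)) (1:ℤ)) *
        (MvPowerSeries.monomial (D t2.card (∑ i ∈ t2, e2 i)) (1:ℤ))
      = MvPowerSeries.monomial (D (t1.card + t2.card) ((∑ i ∈ t1, e1 i) + ∑ i ∈ t2, e2 i)) 1 := by
    intro t1 t2
    rw [monomial_mul_monomial, D_add, one_mul]
  rw [Finset.sum_congr rfl (fun t1 _ => Finset.sum_congr rfl (fun t2 _ => hterm t1 t2))]
  rw [map_sum]
  rw [Finset.sum_congr rfl (fun t1 _ => map_sum _ _ _)]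
  have hco : ∀ t1 t2 : Finset ℕ,
      (MvPowerSeries.coeff (D m N))
        (MvPowerSeries.monomial (D (t1.card + t2.card) ((∑ i ∈ t1, e1 i) + ∑ i ∈ t2, e2 i)) 1)
      = if t1.card + t2.card = m ∧ (∑ i ∈ t1, e1 i) + (∑ i ∈ t2, e2 i) = N then (1:ℤ) else 0 := by
    intro t1 t2
    rw [MvPowerSeries.coeff_monomial]
    congr 1
    rw [eq_iff_iff]
    constructor
    · intro h
      obtain ⟨h1, h2⟩ := D_inj.1 h
      exact ⟨h1.symm, h2.symm⟩
    · rintro ⟨h1, h2⟩; rw [h1, h2]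
  rw [Finset.sum_congr rfl (fun t1 _ => Finset.sum_congr rfl (fun t2 _ => hco t1 t2))]
  rw [← Finset.sum_product']
  rw [Finset.sum_boole]

end Counting

/-! ### inc/dec inverse lemmas -/

lemma decTop_incTop {c : ℕ} {S : Finset ℕ} (hc1 : 1 ≤ c) (hc2 : c < S.card) :
    decTop c (incTop c S) = S := by
  have hgap : gapAt c (incTop c S) := gap_incTop_self hc1 hc2
  have hci : c < (incTop c S).card := by rw [card_incTop]; exact hc2
  apply eq_of_enn_eq
  · rw [card_decTop hgap hci, card_incTop]
  · intro i hi
    rw [card_decTop hgap hci, card_incTop] at hi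
    rw [enn_decTop hgap hci (by rw [card_incTop]; exact hi),
        enn_incTop c S hi, card_incTop]
    split_ifs <;> omega

lemma incTop_decTop {c : ℕ} {S : Finset ℕ} (hgap : gapAt c S) (hc1 : 1 ≤ c)
    (hc2 : c < S.card) : incTop c (decTop c S) = S := by
  have hcd : (decTop c S).card = S.card := card_decTop hgap hc2
  apply eq_of_enn_eq
  · rw [card_incTop, hcd]
  · intro i hi
    rw [card_incTop, hcd] at hi
    rw [enn_incTop c (decTop c S) (by rw [hcd]; exact hi),
        enn_decTop hgap hc2 hi, hcd]
    split_ifs with h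
    · have := one_le_enn_of_gap hgap hc2 hi h
      omega
    · omega

/-! ### The injection -/

open scoped Classical in
noncomputable def phi (a b M : ℕ) (p : Finset ℕ × Finset ℕ) : Finset ℕ × Finset ℕ :=
  if p.1.card = p.2.card then p
  else if p.2.card < p.1.card then
    (incTop (((p.1.card - p.2.card) / M) * (b - a)) p.1, p.2)
  else if gapAt (((p.2.card - p.1.card) / M) * (b - a)) p.2 then
    (p.1, decTop (((p.2.card - p.1.card) / M) * (b - a)) p.2)
  else
    (incTop (((p.2.card - p.1.card) / M) * (M - (a + b))) p.2, p.1)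

open scoped Classical in
noncomputable def psi (a b M : ℕ) (q : Finset ℕ × Finset ℕ) : Finset ℕ × Finset ℕ :=
  if q.1.card = q.2.card then q
  else if q.2.card < q.1.card then
    (if gapAt (((q.1.card - q.2.card) / M) * (b - a)) q.1 then
      (decTop (((q.1.card - q.2.card) / M) * (b - a)) q.1, q.2)
    else
      (q.2, decTop (((q.1.card - q.2.card) / M) * (M - (a + b))) q.1))
  else (q.1, incTop (((q.2.card - q.1.card) / M) * (b - a)) q.2)

lemma sum_shift (x M : ℕ) (I : Finset ℕ) :
    ∑ i ∈ I, (x + i * M) = x * I.card + (∑ i ∈ I, i) * M := by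
  rw [Finset.sum_add_distrib, Finset.sum_const, smul_eq_mul, mul_comm, ← Finset.sum_mul]

section Main

variable {a b M L m n : ℕ}

/-- the counted condition, for generic residue `x`. -/
def cnd (x m n M : ℕ) (p : Finset ℕ × Finset ℕ) : Prop :=
  p.1.card + p.2.card = m ∧
    (∑ i ∈ p.1, (x + i * M)) + (∑ i ∈ p.2, ((M - x) + i * M)) = n * M

lemma cnd_iff (x : ℕ) (p : Finset ℕ × Finset ℕ) :
    cnd x m n M p ↔ (p.1.card + p.2.card = m ∧
      (x * p.1.card + (∑ i ∈ p.1, i) * M) + ((M - x) * p.2.card + (∑ i ∈ p.2, i) * M) = n * M) := by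
  unfold cnd
  rw [sum_shift, sum_shift]

lemma dvd_of_cnd (hgcd : Nat.gcd b M = 1) (hbM : b ≤ M) {p : Finset ℕ × Finset ℕ}
    (h : cnd b m n M p) : (M : ℤ) ∣ ((p.1.card : ℤ) - (p.2.card : ℤ)) := by
  obtain ⟨-, hs⟩ := (cnd_iff b p).1 h
  have hz : (b : ℤ) * ((p.1.card : ℤ) - p.2.card)
      = M * ((n : ℤ) - (∑ i ∈ p.1, (i : ℤ)) - (∑ i ∈ p.2, (i : ℤ)) - p.2.card) := by
    have hc := congrArg (fun t : ℕ => (t : ℤ)) hs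
    push_cast [Nat.cast_sub hbM] at hc
    ring_nf
    ring_nf at hc
    linarith [hc]
  have hdvd : (M : ℤ) ∣ (b : ℤ) * ((p.1.card : ℤ) - p.2.card) := ⟨_, hz⟩
  have hcop : IsCoprime (M : ℤ) (b : ℤ) := by
    rw [Int.isCoprime_iff_gcd_eq_one, Int.gcd_natCast_natCast, Nat.gcd_comm]
    exact hgcd
  exact hcop.dvd_of_dvd_mul_left hdvd

end Main

section Main2

variable {a b M L m n : ℕ}

lemma phi_good (ha : 1 ≤ a) (hab : a < b) (hbM : 2 * b < M) (hgcd : Nat.gcd b M = 1)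
    {p : Finset ℕ × Finset ℕ} (hI : p.1 ⊆ range L) (hJ : p.2 ⊆ range L)
    (hc : cnd b m n M p) :
    ((phi a b M p).1 ⊆ range (L + 1) ∧ (phi a b M p).2 ⊆ range L ∧
      cnd a m n M (phi a b M p)) ∧ psi a b M (phi a b M p) = p := by
  classical
  obtain ⟨I, J⟩ := p
  dsimp only at hI hJ
  rw [cnd_iff] at hc
  obtain ⟨hm, hs⟩ := hc
  dsimp only at hm hs
  have hbM' : b ≤ M := by omega
  have haM : a ≤ M := by omega
  have habM : a + b ≤ M := by omega
  have hMpos : 0 < M := by omega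
  have hsZ : (b:ℤ) * I.card + (∑ i ∈ I, (i:ℤ)) * M + (((M:ℤ) - b) * J.card
      + (∑ i ∈ J, (i:ℤ)) * M) = (n:ℤ) * M := by
    have := congrArg (fun t : ℕ => (t:ℤ)) hs
    push_cast [Nat.cast_sub hbM'] at this
    convert this using 2 <;> push_cast <;> ring
  by_cases h1 : I.card = J.card
  · -- balanced case
    have hphi : phi a b M (I, J) = (I, J) := by unfold phi; rw [if_pos h1]
    rw [hphi]
    refine ⟨⟨hI.trans (by intro x; simp only [mem_range]; omega), hJ, ?_⟩, ?_⟩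
    · rw [cnd_iff]
      refine ⟨hm, ?_⟩
      have h1Z : (I.card : ℤ) = J.card := by exact_mod_cast h1
      have goalZ : (a:ℤ) * I.card + (∑ i ∈ I, (i:ℤ)) * M + (((M:ℤ) - a) * J.card
          + (∑ i ∈ J, (i:ℤ)) * M) = (n:ℤ) * M := by
        linear_combination hsZ + ((a:ℤ) - b) * h1Z
      dsimp only
      have : ((a * I.card + (∑ i ∈ I, i) * M + ((M - a) * J.card + (∑ i ∈ J, i) * M) : ℕ) : ℤ)
          = ((n * M : ℕ) : ℤ) := by
        push_cast [Nat.cast_sub haM]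
        convert goalZ using 2 <;> push_cast <;> ring
      exact_mod_cast this
    · unfold psi; rw [if_pos h1]
  · -- unbalanced cases
    have hdvdZ : (M : ℤ) ∣ ((I.card : ℤ) - (J.card : ℤ)) :=
      dvd_of_cnd hgcd hbM' ((cnd_iff b (I, J)).2 ⟨hm, hs⟩)
    by_cases h2 : J.card < I.card
    · -- case B : more small parts than large parts
      set u := (I.card - J.card) / M with hudef
      have hdvdN : M ∣ (I.card - J.card) := by
        have h' : ((I.card - J.card : ℕ) : ℤ) = (I.card : ℤ) - J.card :=
          Nat.cast_sub h2.le
        have h'' := hdvdZ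
        rw [← h'] at h''
        exact_mod_cast h''
      have hu : u * M = I.card - J.card := by rw [hudef]; exact Nat.div_mul_cancel hdvdN
      have hupos : 1 ≤ u := by
        rcases Nat.eq_zero_or_pos u with h0 | h
        · rw [h0, zero_mul] at hu; omega
        · exact h
      have hc1 : 1 ≤ u * (b - a) := by
        calc 1 = 1 * 1 := rfl
        _ ≤ u * (b - a) := Nat.mul_le_mul hupos (by omega)
      have hcltj : u * (b - a) < I.card := by
        have h3 : u * ((b - a) + 1) ≤ u * M := Nat.mul_le_mul_left u (by omega)
        have h4 : u * ((b - a) + 1) = u * (b - a) + u := by ring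
        have h5 : u * M ≤ I.card := hu ▸ Nat.sub_le _ _
        linarith
      have huZ : (u : ℤ) * M = (I.card : ℤ) - J.card := by
        have := congrArg (fun t : ℕ => (t : ℤ)) hu
        push_cast [Nat.cast_sub h2.le] at this
        exact_mod_cast this
      have hphi : phi a b M (I, J) = (incTop (u * (b - a)) I, J) := by
        unfold phi; dsimp only; rw [if_neg h1, if_pos h2, ← hudef]
      rw [hphi]
      have hgap : gapAt (u * (b - a)) (incTop (u * (b - a)) I) :=
        gap_incTop_self hc1 hcltj
      refine ⟨⟨incTop_subset hI, hJ, ?_⟩, ?_⟩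
      · rw [cnd_iff]
        dsimp only
        rw [card_incTop, sum_incTop _ _ (le_of_lt hcltj)]
        refine ⟨hm, ?_⟩
        zify [haM, hab.le]
        linear_combination hsZ + ((b : ℤ) - a) * huZ
      · unfold psi
        dsimp only
        rw [card_incTop, if_neg h1, if_pos h2, ← hudef, if_pos hgap,
          decTop_incTop hc1 hcltj]
    · -- case C : more large parts than small parts
      have hjk : I.card < J.card := by omega
      set u := (J.card - I.card) / M with hudef
      have hdvdZ' : (M : ℤ) ∣ ((J.card : ℤ) - I.card) := by
        rw [show (J.card : ℤ) - I.card = -((I.card : ℤ) - J.card) by ring]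
        exact dvd_neg.mpr hdvdZ
      have hdvdN : M ∣ (J.card - I.card) := by
        have h' : ((J.card - I.card : ℕ) : ℤ) = (J.card : ℤ) - I.card :=
          Nat.cast_sub hjk.le
        have h'' := hdvdZ'
        rw [← h'] at h''
        exact_mod_cast h''
      have hu : u * M = J.card - I.card := by rw [hudef]; exact Nat.div_mul_cancel hdvdN
      have hupos : 1 ≤ u := by
        rcases Nat.eq_zero_or_pos u with h0 | h
        · rw [h0, zero_mul] at hu; omega
        · exact h
      have hc1 : 1 ≤ u * (b - a) := by
        calc 1 = 1 * 1 := rfl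
        _ ≤ u * (b - a) := Nat.mul_le_mul hupos (by omega)
      have hcm1 : 1 ≤ u * (M - (a + b)) := by
        calc 1 = 1 * 1 := rfl
        _ ≤ u * (M - (a + b)) := Nat.mul_le_mul hupos (by omega)
      have hkM : u * M ≤ J.card := hu ▸ Nat.sub_le _ _
      have hcltk : u * (b - a) < J.card := by
        have h3 : u * ((b - a) + 1) ≤ u * M := Nat.mul_le_mul_left u (by omega)
        have h4 : u * ((b - a) + 1) = u * (b - a) + u := by ring
        linarith
      have hcmlt : u * (M - (a + b)) < J.card := by
        have h3 : u * ((M - (a + b)) + 1) ≤ u * M := Nat.mul_le_mul_left u (by omega)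
        have h4 : u * ((M - (a + b)) + 1) = u * (M - (a + b)) + u := by ring
        linarith
      have hlt : u * (b - a) < u * (M - (a + b)) := by
        have h3 : u * ((b - a) + 1) ≤ u * (M - (a + b)) := Nat.mul_le_mul_left u (by omega)
        have h4 : u * ((b - a) + 1) = u * (b - a) + u := by ring
        linarith
      have huZ : (u : ℤ) * M = (J.card : ℤ) - I.card := by
        have := congrArg (fun t : ℕ => (t : ℤ)) hu
        push_cast [Nat.cast_sub hjk.le] at this
        exact_mod_cast this
      by_cases hgap : gapAt (u * (b - a)) J
      · -- case C1 : gap present, move down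
        have hphi : phi a b M (I, J) = (I, decTop (u * (b - a)) J) := by
          unfold phi; dsimp only; rw [if_neg h1, if_neg h2, ← hudef, if_pos hgap]
        rw [hphi]
        have hd := sum_decTop hgap hcltk
        refine ⟨⟨hI.trans (by intro x; simp only [mem_range]; omega),
          decTop_subset hJ, ?_⟩, ?_⟩
        · rw [cnd_iff]
          dsimp only
          rw [card_decTop hgap hcltk]
          refine ⟨hm, ?_⟩
          have hdZ : ((∑ x ∈ decTop (u * (b - a)) J, (x : ℤ))) + (u : ℤ) * ((b : ℤ) - a)
              = ∑ i ∈ J, (i : ℤ) := by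
            have := congrArg (fun t : ℕ => (t : ℤ)) hd
            push_cast [Nat.cast_sub hab.le] at this
            linear_combination this
          zify [haM]
          linear_combination hsZ + (M : ℤ) * hdZ - ((b : ℤ) - a) * huZ
        · unfold psi
          dsimp only
          rw [card_decTop hgap hcltk, if_neg h1, if_neg h2, ← hudef,
            incTop_decTop hgap hc1 hcltk]
      · -- case C2 : no gap, move up with the complementary amount
        have hphi : phi a b M (I, J) = (incTop (u * (M - (a + b))) J, I) := by
          unfold phi; dsimp only; rw [if_neg h1, if_neg h2, ← hudef, if_neg hgap]
        rw [hphi]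
        refine ⟨⟨incTop_subset hJ, hI, ?_⟩, ?_⟩
        · rw [cnd_iff]
          dsimp only
          rw [card_incTop, sum_incTop _ _ (le_of_lt hcmlt)]
          refine ⟨by omega, ?_⟩
          zify [haM, habM]
          linear_combination hsZ + ((M : ℤ) - a - b) * huZ
        · have hnogap : ¬ gapAt (u * (b - a)) (incTop (u * (M - (a + b))) J) :=
            fun hcon => hgap ((gap_incTop_higher hlt (le_of_lt hcmlt) hcltk hc1).1 hcon)
          unfold psi
          dsimp only
          rw [card_incTop, if_neg (fun hh => h1 hh.symm), if_pos hjk, ← hudef,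
            if_neg hnogap, decTop_incTop hcm1 hcmlt]



theorem countB_le_countA (ha : 1 ≤ a) (hab : a < b) (hbM : 2 * b < M)
    (hgcd : Nat.gcd b M = 1) :
    (((range L).powerset ×ˢ (range L).powerset).filter
      (fun p : Finset ℕ × Finset ℕ => p.1.card + p.2.card = m ∧
        (∑ i ∈ p.1, (b + i * M)) + (∑ i ∈ p.2, ((M - b) + i * M)) = n * M)).card ≤
    (((range (L + 1)).powerset ×ˢ (range L).powerset).filter
      (fun p : Finset ℕ × Finset ℕ => p.1.card + p.2.card = m ∧
        (∑ i ∈ p.1, (a + i * M)) + (∑ i ∈ p.2, ((M - a) + i * M)) = n * M)).card := by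
  classical
  refine Finset.card_le_card_of_injOn (phi a b M) ?_ ?_
  · intro p hp
    rw [Finset.mem_coe, Finset.mem_filter, Finset.mem_product, Finset.mem_powerset, Finset.mem_powerset] at hp
    obtain ⟨⟨hIp, hJp⟩, hcnd⟩ := hp
    obtain ⟨⟨g1, g2, g3⟩, -⟩ := phi_good ha hab hbM hgcd hIp hJp hcnd
    rw [Finset.mem_coe, Finset.mem_filter, Finset.mem_product, Finset.mem_powerset, Finset.mem_powerset]
    exact ⟨⟨g1, g2⟩, g3⟩
  · intro p hp p' hp' heq
    simp only [Finset.coe_filter, Set.mem_setOf_eq, Finset.mem_product,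
      Finset.mem_powerset] at hp hp'
    obtain ⟨⟨hIp, hJp⟩, hcnd⟩ := hp
    obtain ⟨⟨hIp', hJp'⟩, hcnd'⟩ := hp'
    have r1 := (phi_good ha hab hbM hgcd hIp hJp hcnd).2
    have r2 := (phi_good ha hab hbM hgcd hIp' hJp' hcnd').2
    rw [← r1, ← r2, heq]

end Main2

end Stmt8Aux

open Stmt8Aux in
theorem stmt_8 (a b M L m n : ℕ) (ha : 1 ≤ a) (hab : a < b) (hbM : 2 * b < M)
    (hgcd : Nat.gcd b M = 1) :
    letI z : MvPowerSeries (Fin 2) ℤ := MvPowerSeries.X 0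
    letI q : MvPowerSeries (Fin 2) ℤ := MvPowerSeries.X 1
    0 ≤ MvPowerSeries.coeff (Finsupp.single 0 m + Finsupp.single 1 (n * M))
      ((∏ i ∈ range L, (1 + z * q ^ (a + i * M))) *
         (∏ i ∈ range L, (1 + z * q ^ ((M - a) + i * M))) * (1 + z * q ^ (L * M + a)) -
       (∏ i ∈ range L, (1 + z * q ^ (b + i * M))) *
         (∏ i ∈ range L, (1 + z * q ^ ((M - b) + i * M)))) := by
  have hA : (∏ i ∈ range L, (1 + (MvPowerSeries.X 0 : PS) * MvPowerSeries.X 1 ^ (a + i * M))) *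
      (∏ i ∈ range L, (1 + (MvPowerSeries.X 0 : PS) * MvPowerSeries.X 1 ^ ((M - a) + i * M))) *
      (1 + (MvPowerSeries.X 0 : PS) * MvPowerSeries.X 1 ^ (L * M + a)) =
      (∏ i ∈ range (L + 1), (1 + (MvPowerSeries.X 0 : PS) * MvPowerSeries.X 1 ^ (a + i * M))) *
      (∏ i ∈ range L, (1 + (MvPowerSeries.X 0 : PS) * MvPowerSeries.X 1 ^ ((M - a) + i * M))) := by
    rw [Finset.prod_range_succ, show a + L * M = L * M + a from Nat.add_comm _ _]
    ring
  have eA : (MvPowerSeries.coeff (Finsupp.single 0 m + Finsupp.single 1 (n * M)))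
      ((∏ i ∈ range (L + 1), (1 + (MvPowerSeries.X 0 : PS) * MvPowerSeries.X 1 ^ (a + i * M))) *
       (∏ i ∈ range L, (1 + (MvPowerSeries.X 0 : PS) * MvPowerSeries.X 1 ^ ((M - a) + i * M))))
      = ((((range (L + 1)).powerset ×ˢ (range L).powerset).filter
          (fun p : Finset ℕ × Finset ℕ => p.1.card + p.2.card = m ∧
            (∑ i ∈ p.1, (a + i * M)) + (∑ i ∈ p.2, ((M - a) + i * M)) = n * M)).card : ℤ) :=
    coeff_two_prods (fun i => a + i * M) (fun i => (M - a) + i * M) (L + 1) L m (n * M)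
  have eB : (MvPowerSeries.coeff (Finsupp.single 0 m + Finsupp.single 1 (n * M)))
      ((∏ i ∈ range L, (1 + (MvPowerSeries.X 0 : PS) * MvPowerSeries.X 1 ^ (b + i * M))) *
       (∏ i ∈ range L, (1 + (MvPowerSeries.X 0 : PS) * MvPowerSeries.X 1 ^ ((M - b) + i * M))))
      = ((((range L).powerset ×ˢ (range L).powerset).filter
          (fun p : Finset ℕ × Finset ℕ => p.1.card + p.2.card = m ∧
            (∑ i ∈ p.1, (b + i * M)) + (∑ i ∈ p.2, ((M - b) + i * M)) = n * M)).card : ℤ) :=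
    coeff_two_prods (fun i => b + i * M) (fun i => (M - b) + i * M) L L m (n * M)
  rw [hA, map_sub, eA, eB, sub_nonneg]
  have := countB_le_countA (L := L) (m := m) (n := n) ha hab hbM hgcd
  exact_mod_cast this
end

section
/- Every coefficient of the formal power series 1/((q;q^{12})_∞ (q^4;q^{12})_∞ (q^5;q^{12})_∞ (q^9;q^{12})_∞ (q^{11};q^{12})_∞) - 1/((q;q^{12})_∞ (q^5;q^{12})_∞ (q^7;q^{12})_∞ (q^8;q^{12})_∞ (q^9;q^{12})_∞) is nonnegative. -/
/- Machinery adapted from Mathlib's Archive (Wiedijk100Theorems/Partition.lean),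
   which is not importable via `import Mathlib`. -/

open PowerSeries

namespace KR12

noncomputable section

variable {α : Type*}

open Finset

open scoped Classical

universe u
variable {ι : Type u}

/-- A convenience constructor for the power series whose coefficients indicate a subset. -/
def indicatorSeries (α : Type*) [Semiring α] (s : Set ℕ) : PowerSeries α :=
  PowerSeries.mk fun n => if n ∈ s then 1 else 0

theorem coeff_indicator (s : Set ℕ) [Semiring α] (n : ℕ) :
    coeff (R := α) n (indicatorSeries _ s) = if n ∈ s then 1 else 0 :=
  coeff_mk _ _

theorem coeff_indicator_pos (s : Set ℕ) [Semiring α] (n : ℕ) (h : n ∈ s) :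
    coeff (R := α) n (indicatorSeries _ s) = 1 := by rw [coeff_indicator, if_pos h]

theorem coeff_indicator_neg (s : Set ℕ) [Semiring α] (n : ℕ) (h : n ∉ s) :
    coeff (R := α) n (indicatorSeries _ s) = 0 := by rw [coeff_indicator, if_neg h]

theorem constantCoeff_indicator (s : Set ℕ) [Semiring α] :
    constantCoeff (R := α) (indicatorSeries _ s) = if 0 ∈ s then 1 else 0 :=
  rfl

theorem num_series' [Field α] (i : ℕ) :
    (1 - (X : PowerSeries α) ^ (i + 1))⁻¹ = indicatorSeries α {k | i + 1 ∣ k} := by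
  rw [PowerSeries.inv_eq_iff_mul_eq_one]
  · ext n
    cases n with
    | zero => simp [mul_sub, zero_pow, constantCoeff_indicator]
    | succ n =>
      simp only [coeff_one, if_false, mul_sub, mul_one, coeff_indicator,
        LinearMap.map_sub, reduceCtorEq]
      simp_rw [coeff_mul, coeff_X_pow, coeff_indicator, @boole_mul _ _ _ _]
      simp_rw [← ite_and]
      erw [Finset.sum_boole]
      simp_rw [sub_eq_iff_eq_add, zero_add]
      symm
      split_ifs with h
      · suffices #{a ∈ antidiagonal (n + 1) | i + 1 ∣ a.fst ∧ a.snd = i + 1} = 1 by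
          simp only [Set.mem_setOf_eq]; convert congr_arg ((↑) : ℕ → α) this; norm_cast
        rw [card_eq_one]
        cases' h with p hp
        refine ⟨((i + 1) * (p - 1), i + 1), ?_⟩
        ext ⟨a₁, a₂⟩
        simp only [mem_filter, Prod.mk.injEq, HasAntidiagonal.mem_antidiagonal, mem_singleton]
        constructor
        · rintro ⟨a_left, ⟨a, rfl⟩, rfl⟩
          refine ⟨?_, rfl⟩
          rw [Nat.mul_sub_left_distrib, ← hp, ← a_left, mul_one, Nat.add_sub_cancel]
        · rintro ⟨rfl, rfl⟩
          match p with
          | 0 => rw [mul_zero] at hp; cases hp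
          | p + 1 => rw [hp]; simp [mul_add]
      · suffices #{a ∈ antidiagonal (n + 1) | i + 1 ∣ a.fst ∧ a.snd = i + 1} = 0 by
          simp only [Set.mem_setOf_eq]; convert congr_arg ((↑) : ℕ → α) this; norm_cast
        rw [card_eq_zero]
        apply eq_empty_of_forall_notMem
        simp only [Prod.forall, mem_filter, not_and, HasAntidiagonal.mem_antidiagonal]
        rintro _ h₁ h₂ ⟨a, rfl⟩ rfl
        apply h
        simp [← h₂]
  · simp [zero_pow]

-- The main workhorse (verbatim from the Archive).
theorem partialGF_prop (α : Type*) [CommSemiring α] (n : ℕ) (s : Finset ℕ) (hs : ∀ i ∈ s, 0 < i)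
    (c : ℕ → Set ℕ) (hc : ∀ i, i ∉ s → 0 ∈ c i) :
    #{p : n.Partition | (∀ j, p.parts.count j ∈ c j) ∧ ∀ j ∈ p.parts, j ∈ s} =
      coeff (R := α) n (∏ i ∈ s, indicatorSeries α ((· * i) '' c i)) := by
  simp_rw [coeff_prod, coeff_indicator, prod_boole, sum_boole]
  apply congr_arg
  simp only [mem_univ, forall_true_left, not_and, not_forall, exists_prop,
    Set.mem_image, not_exists]
  set φ : (a : Nat.Partition n) →
    a ∈ filter (fun p ↦ (∀ (j : ℕ), Multiset.count j p.parts ∈ c j) ∧ ∀ j ∈ p.parts, j ∈ s) univ →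
    ℕ →₀ ℕ := fun p _ => {
      toFun := fun i => Multiset.count i p.parts • i
      support := Finset.filter (fun i => i ≠ 0) p.parts.toFinset
      mem_support_toFun := fun a => by
        simp only [smul_eq_mul, ne_eq, mul_eq_zero, Multiset.count_eq_zero]
        rw [not_or, not_not]
        simp only [Multiset.mem_toFinset, not_not, mem_filter] }
  refine Finset.card_bij φ ?_ ?_ ?_
  · intro a ha
    simp only [φ, not_forall, not_exists, not_and, exists_prop, mem_filter]
    rw [mem_finsuppAntidiag]
    dsimp only [ne_eq, smul_eq_mul, id_eq, eq_mpr_eq_cast, le_eq_subset, Finsupp.coe_mk]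
    simp only [mem_univ, forall_true_left, not_and, not_forall, exists_prop,
      mem_filter, true_and] at ha
    refine ⟨⟨?_, fun i ↦ ?_⟩, fun i _ ↦ ⟨a.parts.count i, ha.1 i, rfl⟩⟩
    · conv_rhs => simp [← a.parts_sum]
      rw [sum_multiset_count_of_subset _ s]
      · simp only [smul_eq_mul]
      · intro i
        simp only [Multiset.mem_toFinset, not_not, mem_filter]
        apply ha.2
    · simp only [ne_eq, Multiset.mem_toFinset, not_not, mem_filter, and_imp]
      exact fun hi _ ↦ ha.2 i hi
  · intro p₁ hp₁ p₂ hp₂ h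
    apply Nat.Partition.ext
    simp only [true_and, mem_univ, mem_filter] at hp₁ hp₂
    ext i
    simp only [φ, ne_eq, Multiset.mem_toFinset, not_not, smul_eq_mul, Finsupp.mk.injEq] at h
    by_cases hi : i = 0
    · rw [hi]
      rw [Multiset.count_eq_zero_of_notMem]
      · rw [Multiset.count_eq_zero_of_notMem]
        intro a; exact Nat.lt_irrefl 0 (hs 0 (hp₂.2 0 a))
      intro a; exact Nat.lt_irrefl 0 (hs 0 (hp₁.2 0 a))
    · rw [← mul_left_inj' hi]
      rw [funext_iff] at h
      exact h.2 i
  · simp only [φ, mem_filter, mem_finsuppAntidiag, mem_univ, exists_prop, true_and, and_assoc]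
    rintro f ⟨hf, hf₃, hf₄⟩
    have hf' : f ∈ finsuppAntidiag s n := mem_finsuppAntidiag.mpr ⟨hf, hf₃⟩
    simp only [mem_finsuppAntidiag] at hf'
    refine ⟨⟨∑ i ∈ s, Multiset.replicate (f i / i) i, ?_, ?_⟩, ?_, ?_, ?_⟩
    · intro i hi
      simp only [exists_prop, Multiset.mem_sum, mem_map, Function.Embedding.coeFn_mk] at hi
      rcases hi with ⟨t, ht, z⟩
      apply hs
      rwa [Multiset.eq_of_mem_replicate z]
    · simp_rw [Multiset.sum_sum, Multiset.sum_replicate, Nat.nsmul_eq_mul]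
      rw [← hf'.1]
      refine sum_congr rfl fun i hi => Nat.div_mul_cancel ?_
      rcases hf₄ i hi with ⟨w, _, hw₂⟩
      rw [← hw₂]
      exact dvd_mul_left _ _
    · intro i
      simp_rw [Multiset.count_sum', Multiset.count_replicate, sum_ite_eq']
      split_ifs with h
      · rcases hf₄ i h with ⟨w, hw₁, hw₂⟩
        rwa [← hw₂, Nat.mul_div_cancel _ (hs i h)]
      · exact hc _ h
    · intro i hi
      rw [Multiset.mem_sum] at hi
      rcases hi with ⟨j, hj₁, hj₂⟩
      rwa [Multiset.eq_of_mem_replicate hj₂]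
    · ext i
      simp_rw [Multiset.count_sum', Multiset.count_replicate, sum_ite_eq']
      simp only [ne_eq, Multiset.mem_toFinset, not_not, smul_eq_mul, ite_mul,
        zero_mul, Finsupp.coe_mk]
      split_ifs with h
      · apply Nat.div_mul_cancel
        rcases hf₄ i h with ⟨w, _, hw₂⟩
        apply Dvd.intro_left _ hw₂
      · apply symm
        rw [← Finsupp.notMem_support_iff]
        exact notMem_mono hf'.2 h

/-! ### Geometric series and nonnegativity machinery -/

/-- The geometric series `1/(1 - X^k)` as an indicator series. -/
def geo (k : ℕ) : PowerSeries ℚ :=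
  indicatorSeries ℚ {m | k ∣ m}

theorem geo_unit (k : ℕ) (hk : 0 < k) : (1 - (X : PowerSeries ℚ) ^ k) * geo k = 1 := by
  obtain ⟨i, rfl⟩ : ∃ i, k = i + 1 := ⟨k - 1, by omega⟩
  rw [geo, ← num_series']
  exact PowerSeries.mul_inv_cancel _ (by simp [zero_pow])

/-- Nonnegativity of all coefficients. -/
def NN (φ : PowerSeries ℚ) : Prop :=
  ∀ i : ℕ, 0 ≤ coeff (R := ℚ) i φ

theorem NN_one : NN 1 := fun i => by
  rw [coeff_one]
  split_ifs <;> norm_num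

theorem NN_geo (k : ℕ) : NN (geo k) := fun i => by
  rw [geo, coeff_indicator]
  split_ifs <;> norm_num

theorem NN_X_pow (k : ℕ) : NN ((X : PowerSeries ℚ) ^ k) := fun i => by
  rw [coeff_X_pow]
  split_ifs <;> norm_num

theorem NN_mul {φ ψ : PowerSeries ℚ} (hφ : NN φ) (hψ : NN ψ) : NN (φ * ψ) := fun i => by
  rw [coeff_mul]
  exact Finset.sum_nonneg fun p _ => mul_nonneg (hφ p.1) (hψ p.2)

theorem NN_prod {s : Finset ℕ} {f : ℕ → PowerSeries ℚ} (h : ∀ i ∈ s, NN (f i)) :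
    NN (∏ i ∈ s, f i) :=
  Finset.prod_induction f NN (fun _ _ => NN_mul) NN_one h

theorem NN_onePlus : NN (1 + X + (X : PowerSeries ℚ) ^ 2) := fun i => by
  rw [map_add, map_add, coeff_one, coeff_X, coeff_X_pow]
  split_ifs <;> norm_num

/-- Telescoping difference of products. -/
theorem prod_sub_prod (M : ℕ) (f g : ℕ → PowerSeries ℚ) :
    (∏ i ∈ Finset.range M, f i) - ∏ i ∈ Finset.range M, g i =
      ∑ m ∈ Finset.range M,
        (∏ i ∈ Finset.range m, f i) * (f m - g m) * ∏ i ∈ Finset.Ico (m + 1) M, g i := by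
  induction M with
  | zero => simp
  | succ M ih =>
    rw [Finset.sum_range_succ, Finset.prod_range_succ, Finset.prod_range_succ]
    have h1 : ∀ m ∈ Finset.range M,
        (∏ i ∈ Finset.range m, f i) * (f m - g m) * ∏ i ∈ Finset.Ico (m + 1) (M + 1), g i =
        ((∏ i ∈ Finset.range m, f i) * (f m - g m) * ∏ i ∈ Finset.Ico (m + 1) M, g i) * g M := by
      intro m hm
      rw [Finset.prod_Ico_succ_top (by simpa using Nat.succ_le_of_lt (Finset.mem_range.mp hm))]
      ring
    rw [Finset.sum_congr rfl h1, ← Finset.sum_mul, ← ih]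
    simp [Finset.Ico_self]
    ring

/-! ### Counting partitions with parts in given residue classes mod 12 -/

theorem count_eq_coeff (rs : Finset ℕ) (hrs : ∀ r ∈ rs, 0 < r ∧ r < 12) (n M : ℕ)
    (hM : n < 12 * M) :
    (Nat.card {p : n.Partition // ∀ i ∈ p.parts, i % 12 ∈ rs} : ℚ) =
      coeff (R := ℚ) n (∏ m ∈ Finset.range M, ∏ r ∈ rs, geo (12 * m + r)) := by
  set s : Finset ℕ := (Finset.range M).biUnion (fun m => rs.image fun r => 12 * m + r)
    with hs_def
  have mem_s : ∀ j, j ∈ s ↔ ∃ m < M, ∃ r ∈ rs, j = 12 * m + r := by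
    intro j
    simp [hs_def, eq_comm]
  have hs : ∀ i ∈ s, 0 < i := by
    intro i hi
    rw [mem_s] at hi
    obtain ⟨m, _, r, hr, rfl⟩ := hi
    have := (hrs r hr).1
    omega
  have hcard : Nat.card {p : n.Partition // ∀ i ∈ p.parts, i % 12 ∈ rs}
      = #{p : n.Partition | (∀ j, p.parts.count j ∈ (Set.univ : Set ℕ)) ∧
          ∀ j ∈ p.parts, j ∈ s} := by
    rw [Nat.card_eq_fintype_card, Fintype.card_subtype]
    congr 1
    apply Finset.filter_congr
    intro p _
    simp only [Set.mem_univ, forall_const, true_and]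
    constructor
    · intro h j hj
      rw [mem_s]
      have hj12 : j % 12 ∈ rs := h j hj
      have hjn : j ≤ n := by
        simpa [p.parts_sum] using Multiset.single_le_sum (fun _ _ => Nat.zero_le _) _ hj
      exact ⟨j / 12, by omega, j % 12, hj12, by omega⟩
    · intro h j hj
      obtain ⟨m, _, r, hr, rfl⟩ := (mem_s _).mp (h j hj)
      have h12 : r < 12 := (hrs r hr).2
      have hmod : (12 * m + r) % 12 = r := by omega
      rwa [hmod]
  rw [hcard, partialGF_prop ℚ n s hs (fun _ => Set.univ) (fun _ _ => trivial)]
  congr 1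
  have himg : ∀ i : ℕ, ((· * i) '' Set.univ) = {m | i ∣ m} := by
    intro i
    ext m
    simp [Set.mem_image, dvd_iff_exists_eq_mul_left, eq_comm]
  rw [hs_def, Finset.prod_biUnion]
  · apply Finset.prod_congr rfl
    intro m _
    rw [Finset.prod_image]
    · apply Finset.prod_congr rfl
      intro r hr
      rw [himg]
      rfl
    · intro a _ b _ h
      simp only at h
      omega
  · intro a ha b hb hab
    refine Finset.disjoint_left.mpr ?_
    intro j hja hjb
    simp only [Finset.mem_image] at hja hjb
    obtain ⟨r1, hr1, e1⟩ := hja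
    obtain ⟨r2, hr2, e2⟩ := hjb
    have h1 := (hrs r1 hr1).2
    have h2 := (hrs r2 hr2).2
    exact hab (by omega)

/-! ### The three series families -/

/-- Generating series of the common residue classes 1, 5, 9 mod 12 at level `m`. -/
def cS (m : ℕ) : PowerSeries ℚ := geo (12 * m + 1) * geo (12 * m + 5) * geo (12 * m + 9)

/-- Generating series of the residue classes 4, 11 mod 12 at level `m`. -/
def sA (m : ℕ) : PowerSeries ℚ := geo (12 * m + 4) * geo (12 * m + 11)

/-- Generating series of the residue classes 7, 8 mod 12 at level `m`. -/
def tB (m : ℕ) : PowerSeries ℚ := geo (12 * m + 7) * geo (12 * m + 8)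

theorem NN_cS (m : ℕ) : NN (cS m) := NN_mul (NN_mul (NN_geo _) (NN_geo _)) (NN_geo _)
theorem NN_sA (m : ℕ) : NN (sA m) := NN_mul (NN_geo _) (NN_geo _)
theorem NN_tB (m : ℕ) : NN (tB m) := NN_mul (NN_geo _) (NN_geo _)

/-- The key local identity:
`S_m - T_m = X^(12m+4) (1-X^3)(1-X^4) S_m T_m`, coming from
`X^(12m+4) + X^(12m+11) - X^(12m+7) - X^(12m+8) = X^(12m+4)(1-X^3)(1-X^4)`. -/
theorem sub_identity (m : ℕ) :
    sA m - tB m =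
      (X : PowerSeries ℚ) ^ (12 * m + 4) * ((1 - X ^ 3) * (1 - X ^ 4)) * (sA m * tB m) := by
  have h4 := geo_unit (12 * m + 4) (by omega)
  have h11 := geo_unit (12 * m + 11) (by omega)
  have h7 := geo_unit (12 * m + 7) (by omega)
  have h8 := geo_unit (12 * m + 8) (by omega)
  have e1 : tB m * ((1 - (X : PowerSeries ℚ) ^ (12 * m + 7)) *
      (1 - X ^ (12 * m + 8))) = 1 := by
    unfold tB
    linear_combination (geo (12 * m + 8) * (1 - (X : PowerSeries ℚ) ^ (12 * m + 8))) * h7 + h8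
  have e2 : sA m * ((1 - (X : PowerSeries ℚ) ^ (12 * m + 4)) *
      (1 - X ^ (12 * m + 11))) = 1 := by
    unfold sA
    linear_combination (geo (12 * m + 11) * (1 - (X : PowerSeries ℚ) ^ (12 * m + 11))) * h4 + h11
  have poly : (1 - (X : PowerSeries ℚ) ^ (12 * m + 7)) * (1 - X ^ (12 * m + 8)) -
      (1 - X ^ (12 * m + 4)) * (1 - X ^ (12 * m + 11)) =
      X ^ (12 * m + 4) * ((1 - X ^ 3) * (1 - X ^ 4)) := by
    have p4 : (X : PowerSeries ℚ) ^ (12 * m + 4) = X ^ (12 * m) * X ^ 4 := pow_add X (12 * m) 4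
    have p7 : (X : PowerSeries ℚ) ^ (12 * m + 7) = X ^ (12 * m) * X ^ 7 := pow_add X (12 * m) 7
    have p8 : (X : PowerSeries ℚ) ^ (12 * m + 8) = X ^ (12 * m) * X ^ 8 := pow_add X (12 * m) 8
    have p11 : (X : PowerSeries ℚ) ^ (12 * m + 11) = X ^ (12 * m) * X ^ 11 :=
      pow_add X (12 * m) 11
    rw [p4, p7, p8, p11]
    ring
  linear_combination (-(sA m)) * e1 + (tB m) * e2 + (sA m * tB m) * poly

theorem geo_one_cube : (1 - (X : PowerSeries ℚ) ^ 3) * geo 1 = 1 + X + X ^ 2 := by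
  have h1 : (1 - (X : PowerSeries ℚ) ^ 1) * geo 1 = 1 := geo_unit 1 one_pos
  calc (1 - (X : PowerSeries ℚ) ^ 3) * geo 1
      = (1 + X + X ^ 2) * ((1 - (X : PowerSeries ℚ) ^ 1) * geo 1) := by ring
    _ = 1 + X + X ^ 2 := by rw [h1, mul_one]

/-- The main coefficient inequality, via telescoping. -/
theorem main_coeff_le (M n : ℕ) (hM0 : 0 < M) :
    coeff (R := ℚ) n ((∏ i ∈ Finset.range M, cS i) * ∏ i ∈ Finset.range M, tB i) ≤
      coeff (R := ℚ) n ((∏ i ∈ Finset.range M, cS i) * ∏ i ∈ Finset.range M, sA i) := by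
  rw [← sub_nonneg, ← map_sub, ← mul_sub, prod_sub_prod, Finset.mul_sum, map_sum]
  apply Finset.sum_nonneg
  intro m _
  have hC : ∏ i ∈ Finset.range M, cS i =
      geo 1 * geo 5 * geo 9 * ∏ i ∈ Finset.Ico 1 M, cS i := by
    rw [Finset.range_eq_Ico, Finset.prod_eq_prod_Ico_succ_bot hM0]
    have h0 : cS 0 = geo 1 * geo 5 * geo 9 := by norm_num [cS]
    rw [h0]
  have hS : (∏ i ∈ Finset.range m, sA i) * sA m =
      geo 4 * geo 11 * ∏ i ∈ Finset.Ico 1 (m + 1), sA i := by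
    rw [← Finset.prod_range_succ, Finset.range_eq_Ico,
      Finset.prod_eq_prod_Ico_succ_bot (Nat.succ_pos m)]
    have h0 : sA 0 = geo 4 * geo 11 := by norm_num [sA]
    rw [h0]
  have h4 : (1 - (X : PowerSeries ℚ) ^ 4) * geo 4 = 1 := geo_unit 4 (by norm_num)
  have key : (∏ i ∈ Finset.range M, cS i) *
      ((∏ i ∈ Finset.range m, sA i) * (sA m - tB m) * ∏ i ∈ Finset.Ico (m + 1) M, tB i) =
      (1 + X + X ^ 2) * ((X : PowerSeries ℚ) ^ (12 * m + 4) *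
        (geo 5 * geo 9 * (∏ i ∈ Finset.Ico 1 M, cS i) * geo 11 *
          (∏ i ∈ Finset.Ico 1 (m + 1), sA i) * (tB m *
            ∏ i ∈ Finset.Ico (m + 1) M, tB i))) := by
    calc (∏ i ∈ Finset.range M, cS i) *
        ((∏ i ∈ Finset.range m, sA i) * (sA m - tB m) * ∏ i ∈ Finset.Ico (m + 1) M, tB i)
        = (∏ i ∈ Finset.range M, cS i) *
          (((∏ i ∈ Finset.range m, sA i) * sA m) *
            ((X : PowerSeries ℚ) ^ (12 * m + 4) * ((1 - X ^ 3) * (1 - X ^ 4))) *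
            (tB m * ∏ i ∈ Finset.Ico (m + 1) M, tB i)) := by
          rw [sub_identity]; ring
      _ = (geo 1 * geo 5 * geo 9 * ∏ i ∈ Finset.Ico 1 M, cS i) *
          ((geo 4 * geo 11 * ∏ i ∈ Finset.Ico 1 (m + 1), sA i) *
            ((X : PowerSeries ℚ) ^ (12 * m + 4) * ((1 - X ^ 3) * (1 - X ^ 4))) *
            (tB m * ∏ i ∈ Finset.Ico (m + 1) M, tB i)) := by rw [hC, hS]
      _ = ((1 - (X : PowerSeries ℚ) ^ 3) * geo 1) * (((1 - (X : PowerSeries ℚ) ^ 4) * geo 4) *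
          ((X : PowerSeries ℚ) ^ (12 * m + 4) *
          (geo 5 * geo 9 * (∏ i ∈ Finset.Ico 1 M, cS i) * geo 11 *
            (∏ i ∈ Finset.Ico 1 (m + 1), sA i) * (tB m *
              ∏ i ∈ Finset.Ico (m + 1) M, tB i)))) := by ring
      _ = (1 + X + X ^ 2) * ((X : PowerSeries ℚ) ^ (12 * m + 4) *
          (geo 5 * geo 9 * (∏ i ∈ Finset.Ico 1 M, cS i) * geo 11 *
            (∏ i ∈ Finset.Ico 1 (m + 1), sA i) * (tB m *
              ∏ i ∈ Finset.Ico (m + 1) M, tB i))) := by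
          rw [geo_one_cube, h4, one_mul]
  rw [key]
  refine NN_mul NN_onePlus (NN_mul (NN_X_pow _) ?_) n
  exact NN_mul (NN_mul (NN_mul (NN_mul (NN_mul (NN_geo 5) (NN_geo 9))
    (NN_prod fun i _ => NN_cS i)) (NN_geo 11)) (NN_prod fun i _ => NN_sA i))
    (NN_mul (NN_tB m) (NN_prod fun i _ => NN_tB i))

/-! ### Final assembly -/

theorem card_le (n : ℕ) :
    Nat.card {p : n.Partition // ∀ i ∈ p.parts, i % 12 ∈ ({1, 5, 7, 8, 9} : Finset ℕ)} ≤
      Nat.card {p : n.Partition // ∀ i ∈ p.parts, i % 12 ∈ ({1, 4, 5, 9, 11} : Finset ℕ)} := by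
  have hM : n < 12 * (n + 1) := by omega
  have eA := count_eq_coeff {1, 4, 5, 9, 11} (by decide) n (n + 1) hM
  have eB := count_eq_coeff {1, 5, 7, 8, 9} (by decide) n (n + 1) hM
  have pA : ∀ m : ℕ, (∏ r ∈ ({1, 4, 5, 9, 11} : Finset ℕ), geo (12 * m + r)) = cS m * sA m := by
    intro m
    rw [Finset.prod_insert (by decide), Finset.prod_insert (by decide),
      Finset.prod_insert (by decide), Finset.prod_insert (by decide), Finset.prod_singleton]
    unfold cS sA; ring
  have pB : ∀ m : ℕ, (∏ r ∈ ({1, 5, 7, 8, 9} : Finset ℕ), geo (12 * m + r)) = cS m * tB m := by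
    intro m
    rw [Finset.prod_insert (by decide), Finset.prod_insert (by decide),
      Finset.prod_insert (by decide), Finset.prod_insert (by decide), Finset.prod_singleton]
    unfold cS tB; ring
  have hcast : (Nat.card {p : n.Partition //
        ∀ i ∈ p.parts, i % 12 ∈ ({1, 5, 7, 8, 9} : Finset ℕ)} : ℚ) ≤
      (Nat.card {p : n.Partition //
        ∀ i ∈ p.parts, i % 12 ∈ ({1, 4, 5, 9, 11} : Finset ℕ)} : ℚ) := by
    rw [eA, eB, Finset.prod_congr rfl fun m _ => pA m, Finset.prod_congr rfl fun m _ => pB m,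
      Finset.prod_mul_distrib, Finset.prod_mul_distrib]
    exact main_coeff_le (n + 1) n (Nat.succ_pos n)
  exact_mod_cast hcast

end

end KR12

theorem stmt_12 (n : ℕ) :
    Nat.card {p : n.Partition //
        ∀ i ∈ p.parts, i % 12 = 1 ∨ i % 12 = 4 ∨ i % 12 = 5 ∨ i % 12 = 9 ∨ i % 12 = 11} ≥
      Nat.card {p : n.Partition //
        ∀ i ∈ p.parts, i % 12 = 1 ∨ i % 12 = 5 ∨ i % 12 = 7 ∨ i % 12 = 8 ∨ i % 12 = 9} := by
  have hA : Nat.card {p : n.Partition //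
      ∀ i ∈ p.parts, i % 12 = 1 ∨ i % 12 = 4 ∨ i % 12 = 5 ∨ i % 12 = 9 ∨ i % 12 = 11} =
      Nat.card {p : n.Partition // ∀ i ∈ p.parts, i % 12 ∈ ({1, 4, 5, 9, 11} : Finset ℕ)} :=
    Nat.card_congr (Equiv.subtypeEquivRight fun p =>
      forall₂_congr fun i _ => by simp [Finset.mem_insert])
  have hB : Nat.card {p : n.Partition //
      ∀ i ∈ p.parts, i % 12 = 1 ∨ i % 12 = 5 ∨ i % 12 = 7 ∨ i % 12 = 8 ∨ i % 12 = 9} =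
      Nat.card {p : n.Partition // ∀ i ∈ p.parts, i % 12 ∈ ({1, 5, 7, 8, 9} : Finset ℕ)} :=
    Nat.card_congr (Equiv.subtypeEquivRight fun p =>
      forall₂_congr fun i _ => by simp [Finset.mem_insert])
  rw [hA, hB]
  exact KR12.card_le n
end

section
/- Every coefficient of the formal power series 1/((q;q^{12})_∞ (q^3;q^{12})_∞ (q^7;q^{12})_∞ (q^8;q^{12})_∞ (q^{11};q^{12})_∞) - 1/((q^3;q^{12})_∞ (q^4;q^{12})_∞ (q^5;q^{12})_∞ (q^7;q^{12})_∞ (q^{11};q^{12})_∞) is nonnegative. -/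
/-!
Parts in the classes 3, 7, 11 mod 12 are kept. The other parts of a partition into parts
≡ 3, 4, 5, 7, 11 are `12a + 4` (`r` of them) and `12b + 5` (`s` of them), of total
`4r + 5s + 12(Σa + Σb)`. They are replaced by parts `12g + 1` (`u` of them) and `12d + 8`
(`v` of them), of total `u + 8v + 12(Σg + Σd)`: the `g` are the longer and the `d` the shorter
of the lists `a`, `b`, padded with zeros to lengths `u` and `v`, where `u + 8v = 4r + 5s`.
The count `v = v(r, s)` is chosen so that it determines `(r, s)` on each line `4r + 5s = N`,
which makes the map injective.
-/

open Multiset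

namespace KR6

section Pad

variable {α : Type*} [Zero α]

def pad (m : Multiset α) (k : ℕ) : Multiset α := m + replicate (k - card m) 0

theorem card_pad {m : Multiset α} {k : ℕ} (h : card m ≤ k) : card (pad m k) = k := by
  simp only [pad, card_add, card_replicate]
  omega

theorem eq_of_pad_eq {m₁ m₂ : Multiset α} {k : ℕ} (hcard : card m₁ = card m₂)
    (h : pad m₁ k = pad m₂ k) : m₁ = m₂ := by
  rw [pad, pad, hcard] at h
  exact add_right_cancel h

end Pad

theorem sum_pad {α : Type*} [AddCommMonoid α] (m : Multiset α) (k : ℕ) :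
    (pad m k).sum = m.sum := by
  simp [pad]

section SortByCard

variable {α : Type*}

def sortByCard (A B : Multiset α) : Multiset α × Multiset α :=
  if card B ≤ card A then (A, B) else (B, A)

theorem card_sortByCard_fst (A B : Multiset α) :
    card (sortByCard A B).1 = max (card A) (card B) := by
  unfold sortByCard; split_ifs <;> dsimp only <;> omega

theorem card_sortByCard_snd (A B : Multiset α) :
    card (sortByCard A B).2 = min (card A) (card B) := by
  unfold sortByCard; split_ifs <;> dsimp only <;> omega

theorem sum_sortByCard [AddCommMonoid α] (A B : Multiset α) :
    (sortByCard A B).1.sum + (sortByCard A B).2.sum = A.sum + B.sum := by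
  unfold sortByCard; split_ifs
  · rfl
  · exact add_comm _ _

theorem eq_of_sortByCard_eq {A₁ B₁ A₂ B₂ : Multiset α} (hA : card A₁ = card A₂)
    (hB : card B₁ = card B₂) (h : sortByCard A₁ B₁ = sortByCard A₂ B₂) :
    A₁ = A₂ ∧ B₁ = B₂ := by
  unfold sortByCard at h
  rw [hA, hB] at h
  split_ifs at h <;> simp_all [Prod.ext_iff]

end SortByCard

section Residues

variable (c k : ℕ)

def quotientsMod (m : Multiset ℕ) : Multiset ℕ := (m.filter (· % c = k)).map (· / c)

theorem map_quotientsMod (m : Multiset ℕ) :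
    (quotientsMod c k m).map (fun a => c * a + k) = m.filter (· % c = k) := by
  rw [quotientsMod, map_map]
  refine (map_congr rfl fun x hx => ?_).trans (map_id' _)
  simp only [Function.comp_apply, ← (mem_filter.1 hx).2, Nat.div_add_mod]

theorem quotientsMod_add (m₁ m₂ : Multiset ℕ) :
    quotientsMod c k (m₁ + m₂) = quotientsMod c k m₁ + quotientsMod c k m₂ := by
  simp only [quotientsMod, filter_add, map_add]

variable {c k}

theorem quotientsMod_eq_zero {m : Multiset ℕ} (h : ∀ x ∈ m, x % c ≠ k) :
    quotientsMod c k m = 0 := by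
  simp only [quotientsMod, map_eq_zero, filter_eq_nil]
  exact h

theorem quotientsMod_map_mul_add_self (hk : k < c) (m : Multiset ℕ) :
    quotientsMod c k (m.map (fun a => c * a + k)) = m := by
  rw [quotientsMod, filter_eq_self.2, map_map]
  · refine (map_congr rfl fun x _ => ?_).trans (map_id' _)
    simp only [Function.comp_apply]
    rw [Nat.mul_add_div (by omega), Nat.div_eq_of_lt hk, add_zero]
  · intro x hx
    obtain ⟨a, -, rfl⟩ := mem_map.1 hx
    simp [Nat.mod_eq_of_lt hk]

theorem quotientsMod_map_mul_add_of_ne {j : ℕ} (hk : k < c) (hjk : j ≠ k) (m : Multiset ℕ) :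
    quotientsMod c j (m.map (fun a => c * a + k)) = 0 := by
  refine quotientsMod_eq_zero fun x hx => ?_
  obtain ⟨a, -, rfl⟩ := mem_map.1 hx
  simp [Nat.mod_eq_of_lt hk, hjk.symm]

theorem sum_map_mul_add (m : Multiset ℕ) :
    (m.map (fun a => c * a + k)).sum = c * m.sum + k * card m := by
  rw [sum_map_add, sum_map_mul_left, map_id', map_const', sum_replicate, smul_eq_mul, mul_comm k]

end Residues

/- For `v = eightClassCount r s`, the three cases give `v ≡ s`, `v ≡ s ± 1` and `v ≡ s + 2`
mod 4, while `s ≡ 4r + 5s`. So `N = 4r + 5s` and `v` determine the case, and then the point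
`(r, s)` of the line `4r + 5s = N`, whose points differ by multiples of `(5, -4)`. -/
def eightClassCount (r s : ℕ) : ℕ :=
  if s ≤ r then s
  else if s ≤ r + 5 then (if (r + s) % 2 = 0 then r + 1 else r)
  else r + (3 * r + s + 2) % 4

def oneClassCount (r s : ℕ) : ℕ := 4 * r + 5 * s - 8 * eightClassCount r s

theorem max_add_eight_mul_eightClassCount_le (r s : ℕ) :
    max r s + 8 * eightClassCount r s ≤ 4 * r + 5 * s := by
  unfold eightClassCount; split_ifs <;> omega

theorem min_le_eightClassCount (r s : ℕ) : min r s ≤ eightClassCount r s := by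
  unfold eightClassCount; split_ifs <;> omega

theorem oneClassCount_add_eight_mul_eightClassCount (r s : ℕ) :
    oneClassCount r s + 8 * eightClassCount r s = 4 * r + 5 * s := by
  have := max_add_eight_mul_eightClassCount_le r s
  unfold oneClassCount; omega

theorem eq_of_eightClassCount_eq {r₁ s₁ r₂ s₂ : ℕ}
    (hN : 4 * r₁ + 5 * s₁ = 4 * r₂ + 5 * s₂)
    (hv : eightClassCount r₁ s₁ = eightClassCount r₂ s₂) : r₁ = r₂ ∧ s₁ = s₂ := by
  unfold eightClassCount at hv; split_ifs at hv <;> omega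

def encodePair (A B : Multiset ℕ) : Multiset ℕ × Multiset ℕ :=
  (pad (sortByCard A B).1 (oneClassCount (card A) (card B)),
    pad (sortByCard A B).2 (eightClassCount (card A) (card B)))

theorem card_encodePair_fst (A B : Multiset ℕ) :
    card (encodePair A B).1 = oneClassCount (card A) (card B) := by
  refine card_pad ?_
  have := max_add_eight_mul_eightClassCount_le (card A) (card B)
  rw [card_sortByCard_fst, oneClassCount]
  omega

theorem card_encodePair_snd (A B : Multiset ℕ) :
    card (encodePair A B).2 = eightClassCount (card A) (card B) :=
  card_pad ((card_sortByCard_snd A B).trans_le (min_le_eightClassCount _ _))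

theorem eq_of_encodePair_eq {A₁ B₁ A₂ B₂ : Multiset ℕ}
    (h : encodePair A₁ B₁ = encodePair A₂ B₂) : A₁ = A₂ ∧ B₁ = B₂ := by
  have hu := congrArg (card ·.1) h
  have hv := congrArg (card ·.2) h
  simp only [card_encodePair_fst, card_encodePair_snd] at hu hv
  have hN := oneClassCount_add_eight_mul_eightClassCount (card A₁) (card B₁)
  rw [hu, hv, oneClassCount_add_eight_mul_eightClassCount] at hN
  obtain ⟨hA, hB⟩ := eq_of_eightClassCount_eq hN.symm hv
  simp only [encodePair, Prod.ext_iff, hA, hB] at h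
  refine eq_of_sortByCard_eq hA hB (Prod.ext ?_ ?_)
  · exact eq_of_pad_eq (by rw [card_sortByCard_fst, card_sortByCard_fst, hA, hB]) h.1
  · exact eq_of_pad_eq (by rw [card_sortByCard_snd, card_sortByCard_snd, hA, hB]) h.2

theorem sum_encodePair (A B : Multiset ℕ) :
    ((encodePair A B).1.map (fun g => 12 * g + 1)).sum
        + ((encodePair A B).2.map (fun d => 12 * d + 8)).sum
      = (A.map (fun a => 12 * a + 4)).sum + (B.map (fun b => 12 * b + 5)).sum := by
  have hsum := sum_sortByCard A B
  have hcard := oneClassCount_add_eight_mul_eightClassCount (card A) (card B)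
  simp only [sum_map_mul_add, card_encodePair_fst, card_encodePair_snd]
  simp only [encodePair, sum_pad]
  omega

def commonParts (P : Multiset ℕ) : Multiset ℕ :=
  P.filter (fun i => i % 12 = 3 ∨ i % 12 = 7 ∨ i % 12 = 11)

theorem mod_of_mem_commonParts {P : Multiset ℕ} {i : ℕ} (hi : i ∈ commonParts P) :
    i % 12 = 3 ∨ i % 12 = 7 ∨ i % 12 = 11 :=
  (mem_filter.1 hi).2

theorem commonParts_add_quotientsMod {P : Multiset ℕ}
    (hP : ∀ i ∈ P, i % 12 = 3 ∨ i % 12 = 4 ∨ i % 12 = 5 ∨ i % 12 = 7 ∨ i % 12 = 11) :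
    commonParts P + (quotientsMod 12 4 P).map (fun a => 12 * a + 4)
      + (quotientsMod 12 5 P).map (fun b => 12 * b + 5) = P := by
  rw [map_quotientsMod, map_quotientsMod]
  ext x
  simp only [commonParts, count_add, count_filter]
  by_cases hx : x ∈ P
  · have := hP x hx
    split_ifs <;> omega
  · simp [count_eq_zero.2 hx]

def transform (P : Multiset ℕ) : Multiset ℕ :=
  commonParts P
    + (encodePair (quotientsMod 12 4 P) (quotientsMod 12 5 P)).1.map (fun g => 12 * g + 1)
    + (encodePair (quotientsMod 12 4 P) (quotientsMod 12 5 P)).2.map (fun d => 12 * d + 8)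

theorem commonParts_transform (P : Multiset ℕ) : commonParts (transform P) = commonParts P := by
  rw [transform, commonParts, filter_add, filter_add,
    filter_eq_self.2 fun _ => mod_of_mem_commonParts, filter_eq_nil.2, filter_eq_nil.2,
    add_zero, add_zero]
  all_goals
    intro x hx
    obtain ⟨a, -, rfl⟩ := mem_map.1 hx
    omega

theorem quotientsMod_one_transform (P : Multiset ℕ) :
    quotientsMod 12 1 (transform P)
      = (encodePair (quotientsMod 12 4 P) (quotientsMod 12 5 P)).1 := by
  rw [transform, quotientsMod_add, quotientsMod_add, quotientsMod_map_mul_add_self (by norm_num),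
    quotientsMod_map_mul_add_of_ne (by norm_num) (by norm_num), quotientsMod_eq_zero, zero_add,
    add_zero]
  intro x hx
  have := mod_of_mem_commonParts hx
  omega

theorem quotientsMod_eight_transform (P : Multiset ℕ) :
    quotientsMod 12 8 (transform P)
      = (encodePair (quotientsMod 12 4 P) (quotientsMod 12 5 P)).2 := by
  rw [transform, quotientsMod_add, quotientsMod_add, quotientsMod_map_mul_add_self (by norm_num),
    quotientsMod_map_mul_add_of_ne (by norm_num) (by norm_num), quotientsMod_eq_zero, zero_add,
    zero_add]
  intro x hx
  have := mod_of_mem_commonParts hx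
  omega

theorem sum_transform {P : Multiset ℕ}
    (hP : ∀ i ∈ P, i % 12 = 3 ∨ i % 12 = 4 ∨ i % 12 = 5 ∨ i % 12 = 7 ∨ i % 12 = 11) :
    (transform P).sum = P.sum := by
  conv_rhs => rw [← commonParts_add_quotientsMod hP]
  rw [transform, sum_add, sum_add, add_assoc, sum_encodePair, sum_add, sum_add, add_assoc]

theorem pos_of_mem_transform {P : Multiset ℕ} (hP : ∀ i ∈ P, 0 < i) {i : ℕ}
    (hi : i ∈ transform P) : 0 < i := by
  rcases mem_add.1 hi with hi | hi
  · rcases mem_add.1 hi with hi | hi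
    · exact hP i (mem_of_mem_filter hi)
    · obtain ⟨g, -, rfl⟩ := mem_map.1 hi; omega
  · obtain ⟨d, -, rfl⟩ := mem_map.1 hi; omega

theorem mod_of_mem_transform {P : Multiset ℕ} {i : ℕ} (hi : i ∈ transform P) :
    i % 12 = 1 ∨ i % 12 = 3 ∨ i % 12 = 7 ∨ i % 12 = 8 ∨ i % 12 = 11 := by
  rcases mem_add.1 hi with hi | hi
  · rcases mem_add.1 hi with hi | hi
    · have := mod_of_mem_commonParts hi; omega
    · obtain ⟨g, -, rfl⟩ := mem_map.1 hi; omega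
  · obtain ⟨d, -, rfl⟩ := mem_map.1 hi; omega

theorem eq_of_transform_eq {P Q : Multiset ℕ}
    (hP : ∀ i ∈ P, i % 12 = 3 ∨ i % 12 = 4 ∨ i % 12 = 5 ∨ i % 12 = 7 ∨ i % 12 = 11)
    (hQ : ∀ i ∈ Q, i % 12 = 3 ∨ i % 12 = 4 ∨ i % 12 = 5 ∨ i % 12 = 7 ∨ i % 12 = 11)
    (h : transform P = transform Q) : P = Q := by
  have hC : commonParts P = commonParts Q := by
    rw [← commonParts_transform, h, commonParts_transform]
  have hE : encodePair (quotientsMod 12 4 P) (quotientsMod 12 5 P)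
      = encodePair (quotientsMod 12 4 Q) (quotientsMod 12 5 Q) := Prod.ext
    (by rw [← quotientsMod_one_transform, h, quotientsMod_one_transform])
    (by rw [← quotientsMod_eight_transform, h, quotientsMod_eight_transform])
  obtain ⟨h4, h5⟩ := eq_of_encodePair_eq hE
  rw [← commonParts_add_quotientsMod hP, ← commonParts_add_quotientsMod hQ, hC, h4, h5]

def transformPartition (n : ℕ)
    (p : {p : n.Partition //
      ∀ i ∈ p.parts, i % 12 = 3 ∨ i % 12 = 4 ∨ i % 12 = 5 ∨ i % 12 = 7 ∨ i % 12 = 11}) :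
    {p : n.Partition //
      ∀ i ∈ p.parts, i % 12 = 1 ∨ i % 12 = 3 ∨ i % 12 = 7 ∨ i % 12 = 8 ∨ i % 12 = 11} :=
  ⟨⟨transform p.1.parts, pos_of_mem_transform fun _ => p.1.parts_pos,
    (sum_transform p.2).trans p.1.parts_sum⟩, fun _ => mod_of_mem_transform⟩

theorem transformPartition_injective (n : ℕ) : Function.Injective (transformPartition n) :=
  fun p q h => Subtype.ext <| Nat.Partition.ext <|
    eq_of_transform_eq p.2 q.2 (congrArg (·.1.parts) h)

end KR6

theorem stmt_13 (n : ℕ) :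
    Nat.card {p : n.Partition //
        ∀ i ∈ p.parts, i % 12 = 1 ∨ i % 12 = 3 ∨ i % 12 = 7 ∨ i % 12 = 8 ∨ i % 12 = 11} ≥
      Nat.card {p : n.Partition //
        ∀ i ∈ p.parts, i % 12 = 3 ∨ i % 12 = 4 ∨ i % 12 = 5 ∨ i % 12 = 7 ∨ i % 12 = 11} :=
  Nat.card_le_card_of_injective _ (KR6.transformPartition_injective n)
end

section
/- For every L ≥ 0, every coefficient of 1/((q;q^{12})_L (q^8;q^{12})_L) - 1/((q^4;q^{12})_L (q^5;q^{12})_L) is nonnegative. -/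
open PowerSeries Finset

namespace KR14

/-- The geometric series `∑_{e ∣ m} q^m = 1/(1-q^e)`. -/
noncomputable def geo (e : ℕ) : ℚ⟦X⟧ := PowerSeries.mk fun m => if e ∣ m then 1 else 0

lemma coeff_geo (e m : ℕ) : coeff m (geo e) = if e ∣ m then 1 else 0 :=
  coeff_mk _ _

lemma one_sub_mul_geo (e : ℕ) (he : e ≠ 0) : ((1 : ℚ⟦X⟧) - X ^ e) * geo e = 1 := by
  ext n
  rw [sub_mul, one_mul, map_sub, coeff_one]
  rcases lt_or_ge n e with h | h
  · have h0 : coeff n ((X : ℚ⟦X⟧) ^ e * geo e) = 0 := by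
      rw [coeff_mul]
      refine Finset.sum_eq_zero ?_
      rintro ⟨i, j⟩ hij
      rw [Finset.HasAntidiagonal.mem_antidiagonal] at hij
      rw [coeff_X_pow, if_neg (by omega), zero_mul]
    rw [h0, sub_zero, coeff_geo]
    by_cases hn : n = 0
    · subst hn; simp
    · rw [if_neg (fun hd => hn (Nat.eq_zero_of_dvd_of_lt hd h)), if_neg hn]
  · obtain ⟨d, rfl⟩ : ∃ d, n = d + e := ⟨n - e, by omega⟩
    rw [coeff_X_pow_mul, coeff_geo, coeff_geo, if_neg (show ¬(d + e = 0) by omega)]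
    simp only [Nat.dvd_add_self_right]
    exact sub_self _

lemma constCoeff_one_sub (e : ℕ) (he : e ≠ 0) :
    constantCoeff ((1 : ℚ⟦X⟧) - X ^ e) ≠ 0 := by
  rw [map_sub, map_one, map_pow, constantCoeff_X, zero_pow he, sub_zero]
  exact one_ne_zero

/-- index set for the combined product -/
def ss (L : ℕ) : Finset (ℕ × Bool) := (range L) ×ˢ (univ : Finset Bool)

def dfun (a b : ℕ) (i : ℕ × Bool) : ℕ := (if i.2 then b else a) + 12 * i.1

/-- solution set: finitely supported functions on the 2L slots, summing to n,
with each slot value divisible by the corresponding part size -/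
def Sol (L n a b : ℕ) : Finset ((ℕ × Bool) →₀ ℕ) :=
  (finsuppAntidiag (ss L) n).filter fun l => ∀ i ∈ ss L, dfun a b i ∣ l i

lemma prod_booleQ {α : Type*} (s : Finset α) (p : α → Prop) [DecidablePred p] :
    (∏ i ∈ s, if p i then (1 : ℚ) else 0) = if ∀ i ∈ s, p i then 1 else 0 := by
  by_cases h : ∀ i ∈ s, p i
  · rw [if_pos h]
    exact Finset.prod_eq_one fun i hi => if_pos (h i hi)
  · rw [if_neg h]
    push_neg at h
    obtain ⟨i, hi, hpi⟩ := h
    exact Finset.prod_eq_zero hi (if_neg hpi)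

lemma coeff_eq_card (L n a b : ℕ) (ha : a ≠ 0) (hb : b ≠ 0) :
    coeff n ((∏ j ∈ range L, (1 - (X : ℚ⟦X⟧) ^ (a + 12 * j)))⁻¹ *
      (∏ j ∈ range L, (1 - (X : ℚ⟦X⟧) ^ (b + 12 * j)))⁻¹) = (Sol L n a b).card := by
  have hinv : ∀ c : ℕ, c ≠ 0 → (∏ j ∈ range L, (1 - (X : ℚ⟦X⟧) ^ (c + 12 * j)))⁻¹
      = ∏ j ∈ range L, geo (c + 12 * j) := by
    intro c hc
    rw [PowerSeries.inv_eq_iff_mul_eq_one]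
    · rw [← Finset.prod_mul_distrib]
      refine Finset.prod_eq_one fun j _ => ?_
      rw [mul_comm]
      exact one_sub_mul_geo _ (by omega)
    · rw [map_prod]
      exact Finset.prod_ne_zero_iff.mpr fun j _ => constCoeff_one_sub _ (by omega)
  rw [hinv a ha, hinv b hb]
  have hprod : (∏ j ∈ range L, geo (a + 12 * j)) * (∏ j ∈ range L, geo (b + 12 * j))
      = ∏ i ∈ ss L, geo (dfun a b i) := by
    rw [ss, Finset.prod_product]
    rw [← Finset.prod_mul_distrib]
    refine Finset.prod_congr rfl fun j _ => ?_
    rw [Fintype.prod_bool]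
    simp [dfun, mul_comm]
  rw [hprod, coeff_prod]
  simp only [coeff_geo]
  calc (∑ l ∈ finsuppAntidiag (ss L) n, ∏ i ∈ ss L, if dfun a b i ∣ l i then (1:ℚ) else 0)
      = ∑ l ∈ finsuppAntidiag (ss L) n,
          (if ∀ i ∈ ss L, dfun a b i ∣ l i then (1:ℚ) else 0) := by
        exact Finset.sum_congr rfl fun l _ => prod_booleQ _ _
    _ = (Sol L n a b).card := by
        rw [Finset.sum_boole]
        rfl

/-! ### The injection -/

def uu (l : (ℕ × Bool) →₀ ℕ) (j : ℕ) : ℕ := l (j, false) / (4 + 12 * j)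
def vv (l : (ℕ × Bool) →₀ ℕ) (j : ℕ) : ℕ := l (j, true) / (5 + 12 * j)
def kk (L : ℕ) (l : (ℕ × Bool) →₀ ℕ) : ℕ := ∑ j ∈ range L, uu l j
def mm (L : ℕ) (l : (ℕ × Bool) →₀ ℕ) : ℕ := ∑ j ∈ range L, vv l j

noncomputable def W (L : ℕ) (F G : ℕ → ℕ) : (ℕ × Bool) →₀ ℕ :=
  ∑ j ∈ range L, (Finsupp.single (j, false) (F j) + Finsupp.single (j, true) (G j))

lemma W_apply_false (L : ℕ) (F G : ℕ → ℕ) (j₀ : ℕ) :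
    W L F G (j₀, false) = if j₀ ∈ range L then F j₀ else 0 := by
  rw [W, Finsupp.finset_sum_apply]
  have h : ∀ j ∈ range L,
      (Finsupp.single (j, false) (F j) + Finsupp.single (j, true) (G j)) (j₀, false)
      = if j = j₀ then F j else 0 := by
    intro j _
    rw [Finsupp.add_apply, Finsupp.single_apply, Finsupp.single_apply]
    by_cases hj : j = j₀
    · subst hj
      simp
    · rw [if_neg (by simp [hj]), if_neg (by simp), if_neg hj]
      simp
  rw [Finset.sum_congr rfl h, Finset.sum_ite_eq' (range L) j₀ F]

lemma W_apply_true (L : ℕ) (F G : ℕ → ℕ) (j₀ : ℕ) :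
    W L F G (j₀, true) = if j₀ ∈ range L then G j₀ else 0 := by
  rw [W, Finsupp.finset_sum_apply]
  have h : ∀ j ∈ range L,
      (Finsupp.single (j, false) (F j) + Finsupp.single (j, true) (G j)) (j₀, true)
      = if j = j₀ then G j else 0 := by
    intro j _
    rw [Finsupp.add_apply, Finsupp.single_apply, Finsupp.single_apply]
    by_cases hj : j = j₀
    · subst hj
      simp
    · rw [if_neg (by simp), if_neg (by simp [hj]), if_neg hj]
      simp
  rw [Finset.sum_congr rfl h, Finset.sum_ite_eq' (range L) j₀ G]

lemma W_support (L : ℕ) (F G : ℕ → ℕ) : (W L F G).support ⊆ ss L := by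
  refine (Finsupp.support_finset_sum).trans ?_
  intro x hx
  rw [Finset.mem_biUnion] at hx
  obtain ⟨j, hj, hx⟩ := hx
  have := Finsupp.support_add hx
  rw [Finset.mem_union] at this
  rcases this with h | h
  · have := Finsupp.support_single_subset h
    rw [Finset.mem_singleton] at this
    subst this
    exact Finset.mem_product.mpr ⟨hj, Finset.mem_univ _⟩
  · have := Finsupp.support_single_subset h
    rw [Finset.mem_singleton] at this
    subst this
    exact Finset.mem_product.mpr ⟨hj, Finset.mem_univ _⟩

lemma W_sum (L : ℕ) (F G : ℕ → ℕ) :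
    (ss L).sum (W L F G) = ∑ j ∈ range L, (F j + G j) := by
  rw [ss, Finset.sum_product]
  refine Finset.sum_congr rfl fun j hj => ?_
  rw [Fintype.sum_bool, W_apply_true, W_apply_false, if_pos hj, if_pos hj, add_comm]

/-- The map: on (4,5)-solutions. -/
noncomputable def Phi (L : ℕ) (l : (ℕ × Bool) →₀ ℕ) : (ℕ × Bool) →₀ ℕ :=
  if mm L l ≤ kk L l then
    W L (fun j => (1 + 12 * j) * uu l j + if j = 0 then 3 * (kk L l - mm L l) else 0)
        (fun j => (8 + 12 * j) * vv l j)
  else if 4 ∣ (mm L l - kk L l) then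
    W L (fun j => (1 + 12 * j) * vv l j + if j = 0 then 4 * (mm L l - kk L l) - 8 else 0)
        (fun j => (8 + 12 * j) * uu l j + if j = 0 then 8 else 0)
  else
    W L (fun j => (1 + 12 * j) * vv l j + if j = 0 then 4 * (mm L l - kk L l) else 0)
        (fun j => (8 + 12 * j) * uu l j)

section SourceFacts

variable {L n : ℕ} {l : (ℕ × Bool) →₀ ℕ}

lemma sol_support (hl : l ∈ Sol L n 4 5) : l.support ⊆ ss L :=
  (mem_finsuppAntidiag.mp (Finset.mem_filter.mp hl).1).2

lemma val_false (hl : l ∈ Sol L n 4 5) (j : ℕ) :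
    l (j, false) = (4 + 12 * j) * uu l j := by
  by_cases hj : j ∈ range L
  · have hdvd : (4 + 12 * j) ∣ l (j, false) := by
      have := (Finset.mem_filter.mp hl).2 (j, false)
        (Finset.mem_product.mpr ⟨hj, Finset.mem_univ _⟩)
      simpa [dfun] using this
    rw [uu, Nat.mul_div_cancel' hdvd]
  · have h0 : l (j, false) = 0 := by
      by_contra h
      exact hj (Finset.mem_product.mp (sol_support hl (Finsupp.mem_support_iff.mpr h))).1
    rw [h0, uu, h0, Nat.zero_div, mul_zero]

lemma val_true (hl : l ∈ Sol L n 4 5) (j : ℕ) :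
    l (j, true) = (5 + 12 * j) * vv l j := by
  by_cases hj : j ∈ range L
  · have hdvd : (5 + 12 * j) ∣ l (j, true) := by
      have := (Finset.mem_filter.mp hl).2 (j, true)
        (Finset.mem_product.mpr ⟨hj, Finset.mem_univ _⟩)
      simpa [dfun] using this
    rw [vv, Nat.mul_div_cancel' hdvd]
  · have h0 : l (j, true) = 0 := by
      by_contra h
      exact hj (Finset.mem_product.mp (sol_support hl (Finsupp.mem_support_iff.mpr h))).1
    rw [h0, vv, h0, Nat.zero_div, mul_zero]

lemma sum45 (hl : l ∈ Sol L n 4 5) :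
    ∑ j ∈ range L, ((4 + 12 * j) * uu l j + (5 + 12 * j) * vv l j) = n := by
  have hs : (ss L).sum l = n := (mem_finsuppAntidiag.mp (Finset.mem_filter.mp hl).1).1
  rw [ss, Finset.sum_product] at hs
  rw [← hs]
  refine Finset.sum_congr rfl fun j hj => ?_
  rw [Fintype.sum_bool, val_true hl j, val_false hl j, add_comm]

end SourceFacts

lemma shift_sum (L c e : ℕ) (f : ℕ → ℕ) :
    ∑ j ∈ range L, (c + e + 12 * j) * f j
      = (∑ j ∈ range L, (c + 12 * j) * f j) + e * ∑ j ∈ range L, f j := by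
  rw [Finset.mul_sum, ← Finset.sum_add_distrib]
  exact Finset.sum_congr rfl fun j _ => by ring

lemma sum_ite_zero (L c : ℕ) (hL : 0 < L) :
    (∑ j ∈ range L, if j = 0 then c else 0) = c := by
  rw [Finset.sum_ite_eq' (range L) 0 (fun _ => c), if_pos (Finset.mem_range.mpr hL)]

lemma Phi_mem {L n : ℕ} {l : (ℕ × Bool) →₀ ℕ} (hl : l ∈ Sol L n 4 5) :
    Phi L l ∈ Sol L n 1 8 := by
  have hsum := sum45 hl
  rw [Finset.sum_add_distrib] at hsum
  -- basic sum identities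
  have E1 : ∑ j ∈ range L, (4 + 12 * j) * uu l j
      = (∑ j ∈ range L, (1 + 12 * j) * uu l j) + 3 * kk L l := by
    have := shift_sum L 1 3 (uu l)
    rw [kk]; convert this using 2 <;> omega
  have E2 : ∑ j ∈ range L, (8 + 12 * j) * vv l j
      = (∑ j ∈ range L, (5 + 12 * j) * vv l j) + 3 * mm L l := by
    have := shift_sum L 5 3 (vv l)
    rw [mm]; convert this using 2 <;> omega
  have E3 : ∑ j ∈ range L, (5 + 12 * j) * vv l j
      = (∑ j ∈ range L, (1 + 12 * j) * vv l j) + 4 * mm L l := by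
    have := shift_sum L 1 4 (vv l)
    rw [mm]; convert this using 2 <;> omega
  have E4 : ∑ j ∈ range L, (8 + 12 * j) * uu l j
      = (∑ j ∈ range L, (4 + 12 * j) * uu l j) + 4 * kk L l := by
    have := shift_sum L 4 4 (uu l)
    rw [kk]; convert this using 2 <;> omega
  -- if L = 0 then everything is trivial
  by_cases hL : L = 0
  · subst hL
    have hn : n = 0 := by simpa using hsum.symm
    subst hn
    have hW : ∀ F G, W 0 F G = 0 := by
      intro F G; rw [W]; simp
    rw [Phi]
    split_ifs <;>
    · rw [hW]
      refine Finset.mem_filter.mpr ⟨mem_finsuppAntidiag.mpr ⟨by simp, by simp⟩, ?_⟩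
      intro i hi
      simp [ss] at hi
  have hL' : 0 < L := Nat.pos_of_ne_zero hL
  -- case analysis
  rw [Phi]
  have hdvd18 : ∀ (F G : ℕ → ℕ) (p q : ℕ → ℕ) (c c' : ℕ),
      (∀ j, F j = (1 + 12 * j) * p j + if j = 0 then c else 0) →
      (∀ j, G j = (8 + 12 * j) * q j + if j = 0 then 8 * c' else 0) →
      ∀ i ∈ ss L, dfun 1 8 i ∣ W L F G i := by
    intro F G p q c c' hF hG i hi
    obtain ⟨j, b⟩ := i
    have hj : j ∈ range L := (Finset.mem_product.mp hi).1
    cases b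
    · have hd : dfun 1 8 (j, false) = 1 + 12 * j := by simp [dfun]
      rw [W_apply_false, if_pos hj, hF, hd]
      by_cases hj0 : j = 0
      · subst hj0
        omega
      · rw [if_neg hj0, add_zero]
        exact dvd_mul_right _ _
    · have hd : dfun 1 8 (j, true) = 8 + 12 * j := by simp [dfun]
      rw [W_apply_true, if_pos hj, hG, hd]
      by_cases hj0 : j = 0
      · subst hj0
        rw [if_pos rfl]
        exact dvd_add (dvd_mul_right _ _) ⟨c', by norm_num⟩
      · rw [if_neg hj0, add_zero]
        exact dvd_mul_right _ _
  split_ifs with h1 h2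
  · -- case 1 : mm ≤ kk
    refine Finset.mem_filter.mpr ⟨mem_finsuppAntidiag.mpr ⟨?_, W_support L _ _⟩, ?_⟩
    · rw [W_sum]
      rw [Finset.sum_add_distrib, Finset.sum_add_distrib, sum_ite_zero L _ hL']
      omega
    · exact hdvd18 _ _ (uu l) (vv l) _ 0 (fun j => rfl) (fun j => by simp)
  · -- case 2 : kk < mm, 4 ∣ mm - kk
    have hge : 4 ≤ mm L l - kk L l := by omega
    refine Finset.mem_filter.mpr ⟨mem_finsuppAntidiag.mpr ⟨?_, W_support L _ _⟩, ?_⟩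
    · rw [W_sum]
      rw [Finset.sum_add_distrib, Finset.sum_add_distrib, sum_ite_zero L _ hL',
        Finset.sum_add_distrib, sum_ite_zero L _ hL']
      omega
    · exact hdvd18 _ _ (vv l) (uu l) _ 1 (fun j => rfl) (fun j => by norm_num)
  · -- case 3 : kk < mm, ¬ 4 ∣ mm - kk
    refine Finset.mem_filter.mpr ⟨mem_finsuppAntidiag.mpr ⟨?_, W_support L _ _⟩, ?_⟩
    · rw [W_sum]
      rw [Finset.sum_add_distrib, Finset.sum_add_distrib, sum_ite_zero L _ hL']
      omega
    · exact hdvd18 _ _ (vv l) (uu l) _ 0 (fun j => rfl) (fun j => by simp)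

/-! ### decoding -/

def AA (L : ℕ) (l' : (ℕ × Bool) →₀ ℕ) : ℕ := ∑ j ∈ range L, l' (j, false) / (1 + 12 * j)
def BB (L : ℕ) (l' : (ℕ × Bool) →₀ ℕ) : ℕ := ∑ j ∈ range L, l' (j, true) / (8 + 12 * j)

lemma AA_W (L : ℕ) (hL : 0 < L) (F G : ℕ → ℕ) (p : ℕ → ℕ) (c : ℕ)
    (hF : ∀ j, F j = (1 + 12 * j) * p j + if j = 0 then c else 0) :
    AA L (W L F G) = (∑ j ∈ range L, p j) + c := by
  rw [AA]
  have h : ∀ j ∈ range L, W L F G (j, false) / (1 + 12 * j)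
      = p j + if j = 0 then c else 0 := by
    intro j hj
    rw [W_apply_false, if_pos hj, hF]
    by_cases hj0 : j = 0
    · subst hj0; simp
    · rw [if_neg hj0, add_zero, add_zero,
        Nat.mul_div_cancel_left _ (by omega : 0 < 1 + 12 * j)]
  rw [Finset.sum_congr rfl h, Finset.sum_add_distrib, sum_ite_zero L _ hL]

lemma BB_W (L : ℕ) (hL : 0 < L) (F G : ℕ → ℕ) (q : ℕ → ℕ) (c' : ℕ)
    (hG : ∀ j, G j = (8 + 12 * j) * q j + if j = 0 then 8 * c' else 0) :
    BB L (W L F G) = (∑ j ∈ range L, q j) + c' := by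
  rw [BB]
  have h : ∀ j ∈ range L, W L F G (j, true) / (8 + 12 * j)
      = q j + if j = 0 then c' else 0 := by
    intro j hj
    rw [W_apply_true, if_pos hj, hG]
    by_cases hj0 : j = 0
    · subst hj0
      rw [if_pos rfl, if_pos rfl]
      omega
    · rw [if_neg hj0, if_neg hj0, add_zero, add_zero,
        Nat.mul_div_cancel_left _ (by omega : 0 < 8 + 12 * j)]
  rw [Finset.sum_congr rfl h, Finset.sum_add_distrib, sum_ite_zero L _ hL]

lemma Phi_stats (L : ℕ) (hL : 0 < L) (l : (ℕ × Bool) →₀ ℕ) :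
    (AA L (Phi L l) = if mm L l ≤ kk L l then kk L l + 3 * (kk L l - mm L l)
        else if 4 ∣ (mm L l - kk L l) then mm L l + (4 * (mm L l - kk L l) - 8)
        else mm L l + 4 * (mm L l - kk L l)) ∧
    (BB L (Phi L l) = if mm L l ≤ kk L l then mm L l
        else if 4 ∣ (mm L l - kk L l) then kk L l + 1 else kk L l) := by
  rw [Phi]
  split_ifs with h1 h2
  · exact ⟨by rw [AA_W L hL _ _ (uu l) _ (fun j => rfl)]; simp [kk, mm],
      by rw [BB_W L hL _ _ (vv l) 0 (fun j => by simp)]; simp [kk, mm]⟩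
  · exact ⟨by rw [AA_W L hL _ _ (vv l) _ (fun j => rfl)]; simp [kk, mm],
      by rw [BB_W L hL _ _ (uu l) 1 (fun j => by norm_num)]; simp [kk, mm]⟩
  · exact ⟨by rw [AA_W L hL _ _ (vv l) _ (fun j => rfl)]; simp [kk, mm],
      by rw [BB_W L hL _ _ (uu l) 0 (fun j => by simp)]; simp [kk, mm]⟩

lemma Phi_injOn (L n : ℕ) : Set.InjOn (Phi L) (Sol L n 4 5) := by
  intro l₁ h₁ l₂ h₂ heq
  simp only [Finset.mem_coe] at h₁ h₂
  by_cases hL : L = 0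
  · subst hL
    have e₁ : l₁.support ⊆ ∅ := by simpa [ss] using sol_support h₁
    have e₂ : l₂.support ⊆ ∅ := by simpa [ss] using sol_support h₂
    ext i
    have z₁ : l₁ i = 0 := by
      by_contra h
      exact absurd (e₁ (Finsupp.mem_support_iff.mpr h)) (by simp)
    have z₂ : l₂ i = 0 := by
      by_contra h
      exact absurd (e₂ (Finsupp.mem_support_iff.mpr h)) (by simp)
    rw [z₁, z₂]
  have hL' : 0 < L := Nat.pos_of_ne_zero hL
  obtain ⟨hA₁, hB₁⟩ := Phi_stats L hL' l₁
  obtain ⟨hA₂, hB₂⟩ := Phi_stats L hL' l₂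
  rw [heq] at hA₁ hB₁
  rw [hA₂] at hA₁
  rw [hB₂] at hB₁
  -- same case and same (kk, mm)
  have hkm : kk L l₁ = kk L l₂ ∧ mm L l₁ = mm L l₂ := by
    split_ifs at hA₁ hB₁ <;> omega
  have hcase : (mm L l₁ ≤ kk L l₁ ↔ mm L l₂ ≤ kk L l₂) ∧
      (4 ∣ (mm L l₁ - kk L l₁) ↔ 4 ∣ (mm L l₂ - kk L l₂)) := by
    constructor <;> rw [hkm.1, hkm.2]
  -- now prove equality pointwise
  have huv : (∀ j, uu l₁ j = uu l₂ j) ∧ (∀ j, vv l₁ j = vv l₂ j) := by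
    constructor <;> intro j
    all_goals by_cases hj : j ∈ range L
    · -- uu, j ∈ range L
      have hval := congrArg (fun f : (ℕ × Bool) →₀ ℕ => f (j, false)) heq
      have hval' := congrArg (fun f : (ℕ × Bool) →₀ ℕ => f (j, true)) heq
      simp only [Phi] at hval hval'
      rw [hkm.1, hkm.2] at hval hval'
      split_ifs at hval hval' with hc1 hc2 <;>
        rw [W_apply_false, W_apply_false, if_pos hj, if_pos hj] at hval <;>
        rw [W_apply_true, W_apply_true, if_pos hj, if_pos hj] at hval'
      · -- case 1 : F side has uu
        have := Nat.add_right_cancel hval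
        exact Nat.eq_of_mul_eq_mul_left (by omega) this
      · have := Nat.add_right_cancel hval'
        exact Nat.eq_of_mul_eq_mul_left (by omega) this
      · exact Nat.eq_of_mul_eq_mul_left (by omega) hval'
    · -- uu, j ∉ range L
      have z₁ : l₁ (j, false) = 0 := by
        by_contra h
        exact hj (Finset.mem_product.mp (sol_support h₁ (Finsupp.mem_support_iff.mpr h))).1
      have z₂ : l₂ (j, false) = 0 := by
        by_contra h
        exact hj (Finset.mem_product.mp (sol_support h₂ (Finsupp.mem_support_iff.mpr h))).1
      rw [uu, uu, z₁, z₂]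
    · -- vv, j ∈ range L
      have hval := congrArg (fun f : (ℕ × Bool) →₀ ℕ => f (j, false)) heq
      have hval' := congrArg (fun f : (ℕ × Bool) →₀ ℕ => f (j, true)) heq
      simp only [Phi] at hval hval'
      rw [hkm.1, hkm.2] at hval hval'
      split_ifs at hval hval' with hc1 hc2 <;>
        rw [W_apply_false, W_apply_false, if_pos hj, if_pos hj] at hval <;>
        rw [W_apply_true, W_apply_true, if_pos hj, if_pos hj] at hval'
      · exact Nat.eq_of_mul_eq_mul_left (by omega) hval'
      · have := Nat.add_right_cancel hval
        exact Nat.eq_of_mul_eq_mul_left (by omega) this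
      · have := Nat.add_right_cancel hval
        exact Nat.eq_of_mul_eq_mul_left (by omega) this
    · -- vv, j ∉ range L
      have z₁ : l₁ (j, true) = 0 := by
        by_contra h
        exact hj (Finset.mem_product.mp (sol_support h₁ (Finsupp.mem_support_iff.mpr h))).1
      have z₂ : l₂ (j, true) = 0 := by
        by_contra h
        exact hj (Finset.mem_product.mp (sol_support h₂ (Finsupp.mem_support_iff.mpr h))).1
      rw [vv, vv, z₁, z₂]
  ext i
  obtain ⟨j, b⟩ := i
  cases b
  · rw [val_false h₁ j, val_false h₂ j, huv.1 j]
  · rw [val_true h₁ j, val_true h₂ j, huv.2 j]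

lemma card_le (L n : ℕ) : (Sol L n 4 5).card ≤ (Sol L n 1 8).card :=
  Finset.card_le_card_of_injOn (Phi L) (fun l hl => Phi_mem hl) (Phi_injOn L n)

end KR14

theorem stmt_14 (L n : ℕ) :
    0 ≤ PowerSeries.coeff n
      ((∏ j ∈ range L, (1 - (X : ℚ⟦X⟧) ^ (1 + 12 * j)))⁻¹ *
         (∏ j ∈ range L, (1 - (X : ℚ⟦X⟧) ^ (8 + 12 * j)))⁻¹ -
       (∏ j ∈ range L, (1 - (X : ℚ⟦X⟧) ^ (4 + 12 * j)))⁻¹ *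
         (∏ j ∈ range L, (1 - (X : ℚ⟦X⟧) ^ (5 + 12 * j)))⁻¹) := by
  rw [map_sub, KR14.coeff_eq_card L n 1 8 one_ne_zero (by norm_num),
    KR14.coeff_eq_card L n 4 5 (by norm_num) (by norm_num), sub_nonneg, Nat.cast_le]
  exact KR14.card_le L n
end

section
/- Define P(j) = (q;q^{12})_j (q^4;q^{12})_j (q^{11};q^{12})_j and Q(j) = (q;q^{12})_j (q^7;q^{12})_j (q^8;q^{12})_j. Then for every L ≥ 1, 1/P(L) - 1/Q(L) = Σ_{j=1}^L [ (1 - q^{12j-11}) q^{12(j-1)+4} (1-q^3)(1-q^4) ] / [ (q^{12j-11};q^{12})_{L-j+1} (q^{12j-5};q^{12})_{L-j+1} (q^{12j-4};q^{12})_{L-j+1} · (q;q^{12})_j (q^4;q^{12})_j (q^{11};q^{12})_j ]. -/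
open PowerSeries Finset

noncomputable def pp (i : ℕ) : ℚ⟦X⟧ :=
  (1 - X ^ (1 + 12 * i)) * (1 - X ^ (4 + 12 * i)) * (1 - X ^ (11 + 12 * i))

noncomputable def qq (i : ℕ) : ℚ⟦X⟧ :=
  (1 - X ^ (1 + 12 * i)) * (1 - X ^ (7 + 12 * i)) * (1 - X ^ (8 + 12 * i))

lemma ccX (a : ℕ) (ha : a ≠ 0) : constantCoeff (1 - (X : ℚ⟦X⟧) ^ a) ≠ 0 := by
  simp [ha]

lemma cc_pp (i : ℕ) : constantCoeff (pp i) ≠ 0 := by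
  unfold pp
  simp only [map_mul]
  exact mul_ne_zero (mul_ne_zero (ccX _ (by omega)) (ccX _ (by omega))) (ccX _ (by omega))

lemma cc_qq (i : ℕ) : constantCoeff (qq i) ≠ 0 := by
  unfold qq
  simp only [map_mul]
  exact mul_ne_zero (mul_ne_zero (ccX _ (by omega)) (ccX _ (by omega))) (ccX _ (by omega))

noncomputable def G (L j : ℕ) : ℚ⟦X⟧ :=
  (∏ k ∈ range j, pp k)⁻¹ * (∏ k ∈ Ico j L, qq k)⁻¹

lemma my_inv_sub_inv (φ ψ : ℚ⟦X⟧) (hφ : constantCoeff φ ≠ 0)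
    (hψ : constantCoeff ψ ≠ 0) : φ⁻¹ - ψ⁻¹ = (ψ - φ) * (φ⁻¹ * ψ⁻¹) := by
  have h1 : φ * φ⁻¹ = 1 := PowerSeries.mul_inv_cancel _ hφ
  have h2 : ψ * ψ⁻¹ = 1 := PowerSeries.mul_inv_cancel _ hψ
  calc φ⁻¹ - ψ⁻¹ = (ψ * ψ⁻¹) * φ⁻¹ - (φ * φ⁻¹) * ψ⁻¹ := by rw [h1, h2]; ring
    _ = (ψ - φ) * (φ⁻¹ * ψ⁻¹) := by ring

lemma qq_sub_pp (i : ℕ) :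
    qq i - pp i = (1 - X ^ (1 + 12 * i)) * X ^ (4 + 12 * i) *
      (1 - (X : ℚ⟦X⟧) ^ 3) * (1 - (X : ℚ⟦X⟧) ^ 4) := by
  unfold pp qq
  simp only [pow_add, pow_mul]
  ring

theorem stmt_15 (L : ℕ) (hL : 1 ≤ L) :
    ((∏ i ∈ range L, (1 - (X : ℚ⟦X⟧) ^ (1 + 12 * i))) *
        (∏ i ∈ range L, (1 - (X : ℚ⟦X⟧) ^ (4 + 12 * i))) *
        (∏ i ∈ range L, (1 - (X : ℚ⟦X⟧) ^ (11 + 12 * i))))⁻¹ -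
      ((∏ i ∈ range L, (1 - (X : ℚ⟦X⟧) ^ (1 + 12 * i))) *
        (∏ i ∈ range L, (1 - (X : ℚ⟦X⟧) ^ (7 + 12 * i))) *
        (∏ i ∈ range L, (1 - (X : ℚ⟦X⟧) ^ (8 + 12 * i))))⁻¹ =
    ∑ j ∈ Finset.Icc 1 L,
      ((1 - (X : ℚ⟦X⟧) ^ (12 * j - 11)) * X ^ (12 * (j - 1) + 4) *
          (1 - (X : ℚ⟦X⟧) ^ 3) * (1 - (X : ℚ⟦X⟧) ^ 4)) *
        ((∏ i ∈ range (L - j + 1), (1 - (X : ℚ⟦X⟧) ^ ((12 * j - 11) + 12 * i))) *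
           (∏ i ∈ range (L - j + 1), (1 - (X : ℚ⟦X⟧) ^ ((12 * j - 5) + 12 * i))) *
           (∏ i ∈ range (L - j + 1), (1 - (X : ℚ⟦X⟧) ^ ((12 * j - 4) + 12 * i))) *
           ((∏ i ∈ range j, (1 - (X : ℚ⟦X⟧) ^ (1 + 12 * i))) *
             (∏ i ∈ range j, (1 - (X : ℚ⟦X⟧) ^ (4 + 12 * i))) *
             (∏ i ∈ range j, (1 - (X : ℚ⟦X⟧) ^ (11 + 12 * i)))))⁻¹ := by
  have key : ∀ i < L,
      ((1 - (X : ℚ⟦X⟧) ^ (12 * (i + 1) - 11)) * X ^ (12 * ((i + 1) - 1) + 4) *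
          (1 - (X : ℚ⟦X⟧) ^ 3) * (1 - (X : ℚ⟦X⟧) ^ 4)) *
        ((∏ k ∈ range (L - (i + 1) + 1), (1 - (X : ℚ⟦X⟧) ^ ((12 * (i + 1) - 11) + 12 * k))) *
           (∏ k ∈ range (L - (i + 1) + 1), (1 - (X : ℚ⟦X⟧) ^ ((12 * (i + 1) - 5) + 12 * k))) *
           (∏ k ∈ range (L - (i + 1) + 1), (1 - (X : ℚ⟦X⟧) ^ ((12 * (i + 1) - 4) + 12 * k))) *
           ((∏ k ∈ range (i + 1), (1 - (X : ℚ⟦X⟧) ^ (1 + 12 * k))) *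
             (∏ k ∈ range (i + 1), (1 - (X : ℚ⟦X⟧) ^ (4 + 12 * k))) *
             (∏ k ∈ range (i + 1), (1 - (X : ℚ⟦X⟧) ^ (11 + 12 * k)))))⁻¹
        = G L (i + 1) - G L i := by
    intro i hi
    -- identify the three "tail" products with ∏ over Ico i L
    have hrange : L - (i + 1) + 1 = L - i := by omega
    have tail : ∀ c : ℕ,
        (∏ k ∈ Ico i L, (1 - (X : ℚ⟦X⟧) ^ (c + 12 * k))) =
        ∏ k ∈ range (L - (i + 1) + 1), (1 - (X : ℚ⟦X⟧) ^ ((c + 12 * i) + 12 * k)) := by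
      intro c
      rw [Finset.prod_Ico_eq_prod_range, hrange]
      refine Finset.prod_congr rfl fun k _ => ?_
      congr 1
      ring
    have e1 : 12 * (i + 1) - 11 = 1 + 12 * i := by omega
    have e7 : 12 * (i + 1) - 5 = 7 + 12 * i := by omega
    have e8 : 12 * (i + 1) - 4 = 8 + 12 * i := by omega
    have e4 : 12 * ((i + 1) - 1) + 4 = 4 + 12 * i := by omega
    rw [e1, e7, e8, e4, ← tail 1, ← tail 7, ← tail 8]
    -- group products
    have hqIco : (∏ k ∈ Ico i L, (1 - (X : ℚ⟦X⟧) ^ (1 + 12 * k))) *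
        (∏ k ∈ Ico i L, (1 - (X : ℚ⟦X⟧) ^ (7 + 12 * k))) *
        (∏ k ∈ Ico i L, (1 - (X : ℚ⟦X⟧) ^ (8 + 12 * k))) = ∏ k ∈ Ico i L, qq k := by
      simp only [qq, Finset.prod_mul_distrib]
    have hpR : (∏ k ∈ range (i + 1), (1 - (X : ℚ⟦X⟧) ^ (1 + 12 * k))) *
        (∏ k ∈ range (i + 1), (1 - (X : ℚ⟦X⟧) ^ (4 + 12 * k))) *
        (∏ k ∈ range (i + 1), (1 - (X : ℚ⟦X⟧) ^ (11 + 12 * k))) = ∏ k ∈ range (i + 1), pp k := by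
      simp only [pp, Finset.prod_mul_distrib]
    rw [hqIco, hpR]
    -- now pure telescoping algebra
    have hsplitq : (∏ k ∈ Ico i L, qq k) = qq i * ∏ k ∈ Ico (i + 1) L, qq k :=
      Finset.prod_eq_prod_Ico_succ_bot hi _
    have hsplitp : (∏ k ∈ range (i + 1), pp k) = (∏ k ∈ range i, pp k) * pp i :=
      Finset.prod_range_succ _ _
    have ccP : ∀ n, constantCoeff (∏ k ∈ range n, pp k) ≠ 0 := fun n => by
      rw [map_prod]; exact Finset.prod_ne_zero_iff.2 fun k _ => cc_pp k
    have ccQ : ∀ s : Finset ℕ, constantCoeff (∏ k ∈ s, qq k) ≠ 0 := fun s => by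
      rw [map_prod]; exact Finset.prod_ne_zero_iff.2 fun k _ => cc_qq k
    unfold G
    rw [hsplitq, hsplitp]
    simp only [PowerSeries.mul_inv_rev]
    have hdiff : (pp i)⁻¹ - (qq i)⁻¹ = (qq i - pp i) * ((pp i)⁻¹ * (qq i)⁻¹) :=
      my_inv_sub_inv _ _ (cc_pp i) (cc_qq i)
    have hnum := qq_sub_pp i
    calc ((1 - (X : ℚ⟦X⟧) ^ (1 + 12 * i)) * X ^ (4 + 12 * i) *
          (1 - (X : ℚ⟦X⟧) ^ 3) * (1 - (X : ℚ⟦X⟧) ^ 4)) *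
          ((pp i)⁻¹ * (∏ k ∈ range i, pp k)⁻¹ * ((∏ k ∈ Ico (i + 1) L, qq k)⁻¹ * (qq i)⁻¹))
        = (∏ k ∈ range i, pp k)⁻¹ * (∏ k ∈ Ico (i + 1) L, qq k)⁻¹ *
            ((qq i - pp i) * ((pp i)⁻¹ * (qq i)⁻¹)) := by
          rw [hnum]; ring
      _ = (∏ k ∈ range i, pp k)⁻¹ * (∏ k ∈ Ico (i + 1) L, qq k)⁻¹ *
            ((pp i)⁻¹ - (qq i)⁻¹) := by rw [hdiff]
      _ = (pp i)⁻¹ * (∏ k ∈ range i, pp k)⁻¹ * (∏ k ∈ Ico (i + 1) L, qq k)⁻¹ -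
          (∏ k ∈ range i, pp k)⁻¹ * ((∏ k ∈ Ico (i + 1) L, qq k)⁻¹ * (qq i)⁻¹) := by ring
  -- convert the sum to a range sum and telescope
  have hsum : ∑ j ∈ Finset.Icc 1 L,
      ((1 - (X : ℚ⟦X⟧) ^ (12 * j - 11)) * X ^ (12 * (j - 1) + 4) *
          (1 - (X : ℚ⟦X⟧) ^ 3) * (1 - (X : ℚ⟦X⟧) ^ 4)) *
        ((∏ i ∈ range (L - j + 1), (1 - (X : ℚ⟦X⟧) ^ ((12 * j - 11) + 12 * i))) *
           (∏ i ∈ range (L - j + 1), (1 - (X : ℚ⟦X⟧) ^ ((12 * j - 5) + 12 * i))) *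
           (∏ i ∈ range (L - j + 1), (1 - (X : ℚ⟦X⟧) ^ ((12 * j - 4) + 12 * i))) *
           ((∏ i ∈ range j, (1 - (X : ℚ⟦X⟧) ^ (1 + 12 * i))) *
             (∏ i ∈ range j, (1 - (X : ℚ⟦X⟧) ^ (4 + 12 * i))) *
             (∏ i ∈ range j, (1 - (X : ℚ⟦X⟧) ^ (11 + 12 * i)))))⁻¹
      = ∑ i ∈ range L, (G L (i + 1) - G L i) := by
    rw [← Finset.Ico_add_one_right_eq_Icc, Finset.sum_Ico_eq_sum_range]
    have hL' : L + 1 - 1 = L := by omega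
    rw [hL']
    refine Finset.sum_congr rfl fun i hi => ?_
    have hi' : i < L := Finset.mem_range.1 hi
    have := key i hi'
    rw [add_comm 1 i] at *
    exact this
  rw [hsum, Finset.sum_range_sub (G L)]
  unfold G
  rw [Finset.Ico_self, Finset.prod_empty, Finset.range_zero, Finset.prod_empty,
    ← Finset.range_eq_Ico]
  have hP : (∏ k ∈ range L, pp k) =
      (∏ i ∈ range L, (1 - (X : ℚ⟦X⟧) ^ (1 + 12 * i))) *
        (∏ i ∈ range L, (1 - (X : ℚ⟦X⟧) ^ (4 + 12 * i))) *
        (∏ i ∈ range L, (1 - (X : ℚ⟦X⟧) ^ (11 + 12 * i))) := by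
    simp only [pp, Finset.prod_mul_distrib]
  have hQ : (∏ k ∈ range L, qq k) =
      (∏ i ∈ range L, (1 - (X : ℚ⟦X⟧) ^ (1 + 12 * i))) *
        (∏ i ∈ range L, (1 - (X : ℚ⟦X⟧) ^ (7 + 12 * i))) *
        (∏ i ∈ range L, (1 - (X : ℚ⟦X⟧) ^ (8 + 12 * i))) := by
    simp only [qq, Finset.prod_mul_distrib]
  rw [hP, hQ]
  simp
end

section
/- For every L ≥ 0, every coefficient of 1/((q;q^{12})_L (q^4;q^{12})_L (q^{11};q^{12})_L) - 1/((q;q^{12})_L (q^7;q^{12})_L (q^8;q^{12})_L) is nonnegative. -/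
open PowerSeries Finset

noncomputable section

namespace Stmt16Aux




/-- nonnegative coefficients -/
def NN (f : ℚ⟦X⟧) : Prop := ∀ n, 0 ≤ PowerSeries.coeff (R := ℚ) n f

lemma NN.add {f g : ℚ⟦X⟧} (hf : NN f) (hg : NN g) : NN (f + g) := fun n => by
  rw [map_add]; exact add_nonneg (hf n) (hg n)

lemma NN.mul {f g : ℚ⟦X⟧} (hf : NN f) (hg : NN g) : NN (f * g) := fun n => by
  rw [PowerSeries.coeff_mul]
  exact Finset.sum_nonneg fun p _ => mul_nonneg (hf p.1) (hg p.2)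

lemma NN.one : NN 1 := fun n => by
  rw [PowerSeries.coeff_one]; split <;> norm_num

lemma NN.X_pow (k : ℕ) : NN ((X : ℚ⟦X⟧) ^ k) := fun n => by
  rw [PowerSeries.coeff_X_pow]; split <;> norm_num

lemma NN.X : NN (X : ℚ⟦X⟧) := by simpa using NN.X_pow 1

lemma NN.zero : NN 0 := fun n => by simp

lemma NN.prod {s : Finset ℕ} {f : ℕ → ℚ⟦X⟧} (hf : ∀ j ∈ s, NN (f j)) :
    NN (∏ j ∈ s, f j) := by
  classical
  induction s using Finset.induction_on with
  | empty => simpa using NN.one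
  | @insert a s' hnotmem ih =>
      rw [Finset.prod_insert hnotmem]
      exact NN.mul (hf a (Finset.mem_insert_self a s'))
        (ih fun j hj => hf j (Finset.mem_insert_of_mem hj))

/-- geometric series 1/(1-X^k) -/
def geo (k : ℕ) : ℚ⟦X⟧ := PowerSeries.mk fun n => if k ∣ n then 1 else 0

lemma NN.geo (k : ℕ) : NN (Stmt16Aux.geo k) := fun n => by
  rw [Stmt16Aux.geo, PowerSeries.coeff_mk]; split <;> norm_num

lemma one_sub_mul_geo {k : ℕ} (hk : k ≠ 0) : (1 - (X : ℚ⟦X⟧) ^ k) * geo k = 1 := by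
  ext n
  rw [sub_mul, one_mul, map_sub, PowerSeries.coeff_X_pow_mul', PowerSeries.coeff_one]
  simp only [geo, PowerSeries.coeff_mk]
  rcases le_or_gt k n with h | h
  · have hn : n ≠ 0 := by
      rintro rfl; exact hk (Nat.le_zero.mp h)
    have hd : k ∣ n ↔ k ∣ n - k := by
      constructor
      · intro hh; exact Nat.dvd_sub hh dvd_rfl
      · intro hh
        have := Nat.sub_add_cancel h
        rw [← this]; exact Nat.dvd_add hh dvd_rfl
    rw [if_pos h, if_neg hn]
    by_cases hdd : k ∣ n
    · rw [if_pos hdd, if_pos (hd.mp hdd)]; ring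
    · rw [if_neg hdd, if_neg (fun c => hdd (hd.mpr c))]; ring
  · rw [if_neg (not_le.mpr h), sub_zero]
    rcases eq_or_ne n 0 with rfl | hn
    · simp
    · rw [if_neg hn, if_neg]
      intro hdd
      exact hn (Nat.eq_zero_of_dvd_of_lt hdd h)

lemma inv_eq_of_mul_eq_one {f h : ℚ⟦X⟧} (hfh : f * h = 1) : f⁻¹ = h := by
  have hc : PowerSeries.constantCoeff (R := ℚ) f ≠ 0 := by
    intro h0
    have := congrArg (PowerSeries.constantCoeff (R := ℚ)) hfh
    rw [map_mul, map_one, h0, zero_mul] at this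
    exact zero_ne_one this
  rw [PowerSeries.inv_eq_iff_mul_eq_one hc, mul_comm]
  exact hfh

lemma one_sub_X_pow_inv {k : ℕ} (hk : k ≠ 0) : (1 - (X : ℚ⟦X⟧) ^ k)⁻¹ = geo k :=
  inv_eq_of_mul_eq_one (one_sub_mul_geo hk)

lemma prod_one_sub_inv {L : ℕ} {e : ℕ → ℕ} (he : ∀ j, e j ≠ 0) :
    (∏ j ∈ range L, (1 - (X : ℚ⟦X⟧) ^ (e j)))⁻¹ = ∏ j ∈ range L, geo (e j) := by
  apply inv_eq_of_mul_eq_one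
  rw [← Finset.prod_mul_distrib]
  rw [Finset.prod_congr rfl fun j _ => one_sub_mul_geo (he j)]
  exact Finset.prod_const_one

lemma NN_prod_geo_inv {L : ℕ} {e : ℕ → ℕ} (he : ∀ j, e j ≠ 0) :
    NN (∏ j ∈ range L, (1 - (X : ℚ⟦X⟧) ^ (e j)))⁻¹ := by
  rw [prod_one_sub_inv he]
  exact NN.prod fun j _ => NN.geo (e j)

lemma cc_one_sub_X_pow {k : ℕ} (hk : k ≠ 0) :
    PowerSeries.constantCoeff (R := ℚ) (1 - (X : ℚ⟦X⟧) ^ k) = 1 := by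
  rw [map_sub, map_one, map_pow, PowerSeries.constantCoeff_X, zero_pow hk, sub_zero]

lemma cc_prod {L : ℕ} {e : ℕ → ℕ} (he : ∀ j, e j ≠ 0) :
    PowerSeries.constantCoeff (R := ℚ) (∏ j ∈ range L, (1 - (X : ℚ⟦X⟧) ^ (e j))) = 1 := by
  rw [map_prod]
  rw [Finset.prod_congr rfl fun j _ => cc_one_sub_X_pow (he j)]
  exact Finset.prod_const_one

abbrev K := FractionRing ℚ⟦X⟧

abbrev φ : ℚ⟦X⟧ →+* K := algebraMap ℚ⟦X⟧ K

lemma φ_inj : Function.Injective φ := IsFractionRing.injective ℚ⟦X⟧ K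

lemma φ_inv {f : ℚ⟦X⟧} (hf : PowerSeries.constantCoeff (R := ℚ) f ≠ 0) :
    φ f⁻¹ = (φ f)⁻¹ := by
  have h1 : φ f * φ f⁻¹ = 1 := by
    rw [← map_mul, PowerSeries.mul_inv_cancel f hf, map_one]
  exact (inv_eq_of_mul_eq_one_right h1).symm

lemma φ_ne {f : ℚ⟦X⟧} (hf : PowerSeries.constantCoeff (R := ℚ) f ≠ 0) : φ f ≠ 0 := by
  intro h0
  apply hf
  have : f = 0 := φ_inj (by rw [h0, map_zero])
  rw [this, map_zero]



def P (a L : ℕ) : ℚ⟦X⟧ := ∏ j ∈ range L, (1 - (X : ℚ⟦X⟧) ^ (a + 12 * j))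

lemma cc_P {a : ℕ} (ha : a ≠ 0) (L : ℕ) : PowerSeries.constantCoeff (R := ℚ) (P a L) = 1 :=
  cc_prod fun j => by positivity

lemma P_succ (a L : ℕ) : P a (L + 1) = P a L * (1 - (X : ℚ⟦X⟧) ^ (a + 12 * L)) :=
  Finset.prod_range_succ _ _

lemma P_shift (a L : ℕ) : P a (L + 1) = (1 - (X : ℚ⟦X⟧) ^ a) * P (a + 12) L := by
  rw [P, Finset.prod_range_succ',
    show (1 - (X : ℚ⟦X⟧) ^ (a + 12 * 0)) = 1 - (X : ℚ⟦X⟧) ^ a by norm_num, mul_comm]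
  congr 1
  exact Finset.prod_congr rfl fun j _ => by
    rw [show a + 12 * (j + 1) = a + 12 + 12 * j by ring]

def F (L : ℕ) : ℚ⟦X⟧ :=
  (P 1 L)⁻¹ * (P 4 L)⁻¹ * (P 11 L)⁻¹ - (P 1 L)⁻¹ * (P 7 L)⁻¹ * (P 8 L)⁻¹

set_option maxHeartbeats 4000000 in
lemma key (L : ℕ) : F (L + 1) =
    F L * ((1 - (X : ℚ⟦X⟧) ^ (1 + 12 * L))⁻¹ * (1 - (X : ℚ⟦X⟧) ^ (7 + 12 * L))⁻¹ *
      (1 - (X : ℚ⟦X⟧) ^ (8 + 12 * L))⁻¹)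
    + (X : ℚ⟦X⟧) ^ (4 + 12 * L) * (1 + X + X ^ 2) * (P 13 L)⁻¹ * (P 16 L)⁻¹ *
      (P 11 (L + 1))⁻¹ * (1 - (X : ℚ⟦X⟧) ^ (7 + 12 * L))⁻¹ *
      (1 - (X : ℚ⟦X⟧) ^ (8 + 12 * L))⁻¹ := by
  apply φ_inj
  have hu : ∀ k : ℕ, k ≠ 0 → φ ((1 - (X : ℚ⟦X⟧) ^ k)⁻¹) = (1 - φ (X : ℚ⟦X⟧) ^ k)⁻¹ := by
    intro k hk
    rw [φ_inv (by rw [cc_one_sub_X_pow hk]; norm_num)]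
    rw [map_sub, map_one, map_pow]
  have hP : ∀ a L' : ℕ, a ≠ 0 → φ ((P a L')⁻¹) = (φ (P a L'))⁻¹ := fun a L' ha =>
    φ_inv (by rw [cc_P ha]; norm_num)
  have hPne : ∀ a L' : ℕ, a ≠ 0 → φ (P a L') ≠ 0 := fun a L' ha =>
    φ_ne (by rw [cc_P ha]; norm_num)
  have hune : ∀ k : ℕ, k ≠ 0 → (1 - φ (X : ℚ⟦X⟧) ^ k) ≠ 0 := by
    intro k hk
    have := φ_ne (f := 1 - (X : ℚ⟦X⟧) ^ k) (by rw [cc_one_sub_X_pow hk]; norm_num)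
    rwa [map_sub, map_one, map_pow] at this
  set x : K := φ (X : ℚ⟦X⟧) with hx
  -- relations
  have hsucc : ∀ a : ℕ, φ (P a (L + 1)) = φ (P a L) * (1 - x ^ (a + 12 * L)) := by
    intro a
    rw [P_succ, map_mul, map_sub, map_one, map_pow]
  have hA : φ (P 1 L) * (1 - x ^ (1 + 12 * L)) = (1 - x ^ 1) * φ (P 13 L) := by
    have := congrArg φ ((P_succ 1 L).symm.trans (P_shift 1 L))
    rwa [map_mul, map_mul, map_sub, map_sub, map_one, map_pow, map_pow] at this
  have hB : φ (P 4 L) * (1 - x ^ (4 + 12 * L)) = (1 - x ^ 4) * φ (P 16 L) := by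
    have := congrArg φ ((P_succ 4 L).symm.trans (P_shift 4 L))
    rwa [map_mul, map_mul, map_sub, map_sub, map_one, map_pow, map_pow] at this
  simp only [F, map_sub, map_add, map_mul, map_pow, map_one,
    hP _ _ (by norm_num : (1:ℕ) ≠ 0), hP _ _ (by norm_num : (4:ℕ) ≠ 0),
    hP _ _ (by norm_num : (7:ℕ) ≠ 0), hP _ _ (by norm_num : (8:ℕ) ≠ 0),
    hP _ _ (by norm_num : (11:ℕ) ≠ 0), hP _ _ (by norm_num : (13:ℕ) ≠ 0),
    hP _ _ (by norm_num : (16:ℕ) ≠ 0),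
    hu _ (by positivity : 1 + 12 * L ≠ 0), hu _ (by positivity : 7 + 12 * L ≠ 0),
    hu _ (by positivity : 8 + 12 * L ≠ 0)]
  rw [hsucc 1, hsucc 4, hsucc 7, hsucc 8, hsucc 11]
  -- substitute R and T
  have hR : φ (P 13 L) = (1 - x ^ 1)⁻¹ * (φ (P 1 L) * (1 - x ^ (1 + 12 * L))) := by
    rw [eq_inv_mul_iff_mul_eq₀ (hune 1 one_ne_zero)]
    exact hA.symm
  have hT : φ (P 16 L) = (1 - x ^ 4)⁻¹ * (φ (P 4 L) * (1 - x ^ (4 + 12 * L))) := by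
    rw [eq_inv_mul_iff_mul_eq₀ (hune 4 (by norm_num))]
    exact hB.symm
  rw [hR, hT]
  have n1 := hPne 1 L one_ne_zero
  have n4 := hPne 4 L (by norm_num)
  have n7 := hPne 7 L (by norm_num)
  have n8 := hPne 8 L (by norm_num)
  have n11 := hPne 11 L (by norm_num)
  have m1 := hune 1 one_ne_zero
  have m4 := hune 4 (by norm_num)
  have m1L := hune (1 + 12 * L) (by positivity)
  have m4L := hune (4 + 12 * L) (by positivity)
  have m7L := hune (7 + 12 * L) (by positivity)
  have m8L := hune (8 + 12 * L) (by positivity)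
  have m11L := hune (11 + 12 * L) (by positivity)
  rw [pow_one] at hR m1 ⊢
  field_simp
  rw [← hx]
  ring



lemma NN_P_inv {a : ℕ} (ha : a ≠ 0) (L : ℕ) : NN (P a L)⁻¹ :=
  NN_prod_geo_inv fun j => by positivity

lemma NN_one_sub_inv {k : ℕ} (hk : k ≠ 0) : NN (1 - (X : ℚ⟦X⟧) ^ k)⁻¹ := by
  rw [one_sub_X_pow_inv hk]
  exact NN.geo k

lemma NN_F (L : ℕ) : NN (F L) := by
  induction L with
  | zero =>
      have : F 0 = 0 := by
        simp [F, P]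
      rw [this]
      exact NN.zero
  | succ L ih =>
      rw [key L]
      refine NN.add (NN.mul ih ?_) ?_
      · exact NN.mul (NN.mul (NN_one_sub_inv (by positivity)) (NN_one_sub_inv (by positivity)))
          (NN_one_sub_inv (by positivity))
      · refine NN.mul (NN.mul (NN.mul (NN.mul (NN.mul (NN.mul (NN.X_pow _) ?_) ?_) ?_) ?_) ?_) ?_
        · exact NN.add (NN.add NN.one NN.X) (NN.X_pow 2)
        · exact NN_P_inv (by norm_num) L
        · exact NN_P_inv (by norm_num) L
        · exact NN_P_inv (by norm_num) (L + 1)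
        · exact NN_one_sub_inv (by positivity)
        · exact NN_one_sub_inv (by positivity)

end Stmt16Aux

end

theorem stmt_16 (L n : ℕ) :
    0 ≤ PowerSeries.coeff (R := ℚ) n
      ((∏ j ∈ range L, (1 - (X : ℚ⟦X⟧) ^ (1 + 12 * j)))⁻¹ *
         (∏ j ∈ range L, (1 - (X : ℚ⟦X⟧) ^ (4 + 12 * j)))⁻¹ *
         (∏ j ∈ range L, (1 - (X : ℚ⟦X⟧) ^ (11 + 12 * j)))⁻¹ -
       (∏ j ∈ range L, (1 - (X : ℚ⟦X⟧) ^ (1 + 12 * j)))⁻¹ *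
         (∏ j ∈ range L, (1 - (X : ℚ⟦X⟧) ^ (7 + 12 * j)))⁻¹ *
         (∏ j ∈ range L, (1 - (X : ℚ⟦X⟧) ^ (8 + 12 * j)))⁻¹) :=
  Stmt16Aux.NN_F L n
end

section
/- Every coefficient of ∏_{n≥0}(1 + q^{4n+1} + q^{2(4n+1)}) / (q^2;q^4)_∞ - ∏_{n≥0}(1 + q^{4n+3} + q^{2(4n+3)}) / (q^2;q^4)_∞ is nonnegative. -/
/-!
Replacing every part `4k + 3` of a partition by the two parts `4k + 1` and `2` maps the partitions
counted on the right injectively into those counted on the left: the parts `≡ 1 (mod 4)` of the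
image recover the parts `≡ 3` of the original, hence also how many `2`s were added, and the
multiplicity of `4k + 1` in the image is that of `4k + 3` in the original.
-/

open Multiset

def splitThrees (s : Multiset ℕ) : Multiset ℕ :=
  (s.filter (· % 4 = 3)).map (· - 2) + replicate (s.filter (· % 4 = 3)).card 2 +
    s.filter (¬ · % 4 = 3)

lemma Multiset.map_add_map_tsub_cancel {t : Multiset ℕ} {k : ℕ} (h : ∀ a ∈ t, k ≤ a) :
    (t.map (· - k)).map (· + k) = t := by
  rw [map_map]
  exact (map_congr rfl fun a ha => Nat.sub_add_cancel (h a ha)).trans (map_id _)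

lemma map_add_two_map_sub_two (s : Multiset ℕ) :
    ((s.filter (· % 4 = 3)).map (· - 2)).map (· + 2) = s.filter (· % 4 = 3) :=
  map_add_map_tsub_cancel fun a ha => by
    have := (mem_filter.1 ha).2
    omega

lemma sum_splitThrees (s : Multiset ℕ) : (splitThrees s).sum = s.sum := by
  have hthrees := congrArg Multiset.sum (map_add_two_map_sub_two s)
  rw [sum_map_add, map_id', map_const', sum_replicate, card_map] at hthrees
  rw [splitThrees, sum_add, sum_add, sum_replicate, hthrees, ← sum_add, filter_add_not]

variable {s : Multiset ℕ}

lemma pos_of_mem_splitThrees (hs : ∀ a ∈ s, 0 < a) {j : ℕ} (hj : j ∈ splitThrees s) :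
    0 < j := by
  simp only [splitThrees, mem_add, mem_map, mem_filter, mem_replicate] at hj
  rcases hj with (⟨a, ⟨-, ha⟩, rfl⟩ | ⟨-, rfl⟩) | ⟨hj, -⟩
  · omega
  · norm_num
  · exact hs j hj

lemma mod_four_of_mem_splitThrees (hs : ∀ a ∈ s, a % 4 = 3 ∨ a % 4 = 2) {j : ℕ}
    (hj : j ∈ splitThrees s) : j % 4 = 1 ∨ j % 4 = 2 := by
  simp only [splitThrees, mem_add, mem_map, mem_filter, mem_replicate] at hj
  rcases hj with (⟨a, ⟨-, ha⟩, rfl⟩ | ⟨-, rfl⟩) | ⟨hj, hj3⟩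
  · omega
  · norm_num
  · have := hs j hj
    omega

lemma filter_one_splitThrees (hs : ∀ a ∈ s, a % 4 = 3 ∨ a % 4 = 2) :
    (splitThrees s).filter (· % 4 = 1) = (s.filter (· % 4 = 3)).map (· - 2) := by
  have hones : ∀ j ∈ (s.filter (· % 4 = 3)).map (· - 2), j % 4 = 1 := by
    simp only [mem_map, mem_filter]
    rintro _ ⟨a, ⟨-, ha⟩, rfl⟩
    omega
  have htwos : ∀ j ∈ replicate (s.filter (· % 4 = 3)).card 2, ¬ j % 4 = 1 := by
    intro j hj
    rw [eq_of_mem_replicate hj]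
    norm_num
  have hrest : ∀ j ∈ s.filter (¬ · % 4 = 3), ¬ j % 4 = 1 := by
    intro j hj
    have := hs j (mem_of_mem_filter hj)
    have := (mem_filter.1 hj).2
    omega
  rw [splitThrees, filter_add, filter_add, filter_eq_self.2 hones, filter_eq_nil.2 htwos,
    filter_eq_nil.2 hrest, add_zero, add_zero]

lemma filter_two_splitThrees (hs : ∀ a ∈ s, a % 4 = 3 ∨ a % 4 = 2) :
    (splitThrees s).filter (· % 4 = 2) =
      replicate (s.filter (· % 4 = 3)).card 2 + s.filter (¬ · % 4 = 3) := by
  have hones : ∀ j ∈ (s.filter (· % 4 = 3)).map (· - 2), ¬ j % 4 = 2 := by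
    simp only [mem_map, mem_filter]
    rintro _ ⟨a, ⟨-, ha⟩, rfl⟩
    omega
  have htwos : ∀ j ∈ replicate (s.filter (· % 4 = 3)).card 2, j % 4 = 2 := by
    intro j hj
    rw [eq_of_mem_replicate hj]
  have hrest : ∀ j ∈ s.filter (¬ · % 4 = 3), j % 4 = 2 := by
    intro j hj
    have := hs j (mem_of_mem_filter hj)
    have := (mem_filter.1 hj).2
    omega
  rw [splitThrees, filter_add, filter_add, filter_eq_nil.2 hones, filter_eq_self.2 htwos,
    filter_eq_self.2 hrest, zero_add]

lemma count_splitThrees (hs : ∀ a ∈ s, a % 4 = 3 ∨ a % 4 = 2) {j : ℕ} (hj : j % 4 = 1) :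
    (splitThrees s).count j = s.count (j + 2) := by
  rw [← count_filter_of_pos (p := (· % 4 = 1)) hj, filter_one_splitThrees hs,
    ← count_filter_of_pos (p := (· % 4 = 3)) (by omega : (j + 2) % 4 = 3),
    ← count_map_eq_count' (· + 2) _ (add_left_injective 2) j, map_add_two_map_sub_two]

lemma splitThrees_injOn {s₁ s₂ : Multiset ℕ} (hs₁ : ∀ a ∈ s₁, a % 4 = 3 ∨ a % 4 = 2)
    (hs₂ : ∀ a ∈ s₂, a % 4 = 3 ∨ a % 4 = 2) (h : splitThrees s₁ = splitThrees s₂) :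
    s₁ = s₂ := by
  have hthrees : s₁.filter (· % 4 = 3) = s₂.filter (· % 4 = 3) := by
    rw [← map_add_two_map_sub_two s₁, ← map_add_two_map_sub_two s₂,
      ← filter_one_splitThrees hs₁, ← filter_one_splitThrees hs₂, h]
  have hrest : s₁.filter (¬ · % 4 = 3) = s₂.filter (¬ · % 4 = 3) := by
    have := filter_two_splitThrees hs₁
    rw [h, filter_two_splitThrees hs₂, hthrees] at this
    exact (add_left_cancel this).symm
  rw [← filter_add_not (· % 4 = 3) s₁, ← filter_add_not (· % 4 = 3) s₂, hthrees, hrest]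

def ModFourRestricted (r : ℕ) {n : ℕ} (p : n.Partition) : Prop :=
  (∀ i ∈ p.parts, i % 4 = r ∨ i % 4 = 2) ∧
    ∀ i ∈ p.parts, i % 4 = r → p.parts.count i ≤ 2

def splitThreesPartition {n : ℕ} (p : {p : n.Partition // ModFourRestricted 3 p}) :
    {p : n.Partition // ModFourRestricted 1 p} :=
  ⟨⟨splitThrees p.1.parts, pos_of_mem_splitThrees fun _ => p.1.parts_pos,
      (sum_splitThrees _).trans p.1.parts_sum⟩,
    fun _ => mod_four_of_mem_splitThrees p.2.1,
    fun j _ hj => by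
      rw [count_splitThrees p.2.1 hj]
      by_cases hmem : j + 2 ∈ p.1.parts
      · exact p.2.2 _ hmem (by omega)
      · simp [count_eq_zero_of_notMem hmem]⟩

lemma splitThreesPartition_injective {n : ℕ} :
    Function.Injective (splitThreesPartition (n := n)) := fun p q h =>
  Subtype.ext <| Nat.Partition.ext <|
    splitThrees_injOn p.2.1 q.2.1 (congrArg (fun r => r.1.parts) h)

theorem stmt_17 (n : ℕ) :
    Nat.card {p : n.Partition //
        (∀ i ∈ p.parts, i % 4 = 1 ∨ i % 4 = 2) ∧
        ∀ i ∈ p.parts, i % 4 = 1 → p.parts.count i ≤ 2} ≥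
      Nat.card {p : n.Partition //
        (∀ i ∈ p.parts, i % 4 = 3 ∨ i % 4 = 2) ∧
        ∀ i ∈ p.parts, i % 4 = 3 → p.parts.count i ≤ 2} :=
  Nat.card_le_card_of_injective _ splitThreesPartition_injective
end
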